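/- arXiv:1108.3355 — 7 statements merged into one kernel-verified Lean document; each statement's English description precedes it below -/
import Mathlib

section
/- Let ρ be a locally finite balanced relation on a set X and let R be an associative ring with unity. Then the convolution product on I(X,ρ,R) is associative: for all f, g, h ∈ I(X,ρ,R), (fg)h = f(gh). -/
open scoped Classical

universe u v

/-- The interval `[x,y] = {z | x ρ z and z ρ y}` determined by a relation `ρ`. -/
def RelInterval {X : Type*} (ρ : X → X → Prop) (x y : X) : Set X :=
  {z | ρ x z ∧ ρ z y}

/-- A relation is locally finite if every interval is finite. -/
def RelLocallyFinite {X : Type*} (ρ : X → X → Prop) : Prop :=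
  ∀ x y, (RelInterval ρ x y).Finite

/-- A relation is balanced if it is reflexive and whenever
`w ρ x`, `x ρ y`, `y ρ z`, `w ρ z` all hold, `w ρ y ↔ x ρ z`. -/
def RelBalanced {X : Type*} (ρ : X → X → Prop) : Prop :=
  (∀ x, ρ x x) ∧
  ∀ w x y z, ρ w x → ρ x y → ρ y z → ρ w z → (ρ w y ↔ ρ x z)

/-- The underlying set of the generalized incidence ring `I(X,ρ,R)`:
functions `f : X → X → R` with `f x y ≠ 0 → x ρ y`. -/
def IncFun {X : Type*} (ρ : X → X → Prop) (R : Type*) [Ring R] :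
    Set (X → X → R) :=
  {f | ∀ x y, f x y ≠ 0 → ρ x y}

/-- The convolution product on `I(X,ρ,R)`. -/
noncomputable def conv {X R : Type*} [Ring R] (ρ : X → X → Prop)
    (f g : X → X → R) : X → X → R :=
  fun x y => if ρ x y then ∑ᶠ z ∈ RelInterval ρ x y, f x z * g z y else 0

/-- The function `e` with `e x x = 1` and `e x y = 0` for `x ≠ y`. -/
noncomputable def eId (X R : Type*) [Ring R] : X → X → R :=
  fun x y => if x = y then 1 else 0

/-- The matrix unit `e_{xy}`: value `1` at `(x,y)` and `0` elsewhere. -/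
noncomputable def eUnit {X : Type*} (R : Type*) [Ring R] (x y : X) : X → X → R :=
  fun i j => if i = x ∧ j = y then 1 else 0

/-- A homomorphism `Φ : ρ → G`: `Φ x y * Φ y z = Φ x z` on transitive triples. -/
def IsRelHom {X G : Type*} [Mul G] (ρ : X → X → Prop) (Φ : X → X → G) : Prop :=
  ∀ x y z, ρ x y → ρ y z → ρ x z → Φ x y * Φ y z = Φ x z

/-- The homogeneous component `S_a` induced by `Φ`. -/
def gradeSet {X G : Type*} (R : Type*) [Ring R] (ρ : X → X → Prop)
    (Φ : X → X → G) (a : G) : Set (X → X → R) :=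
  {f | (∀ x y, f x y ≠ 0 → ρ x y) ∧ ∀ x y, f x y ≠ 0 → Φ x y = a}

/-- The image `{Φ x y : x ρ y}` of a homomorphism `Φ : ρ → G`. -/
def RelImage {X G : Type*} (ρ : X → X → Prop) (Φ : X → X → G) : Set G :=
  {a | ∃ x y, ρ x y ∧ Φ x y = a}

/-- `θ : X₂ → X₁` is a compression map from `(X₂,ρ₂)` onto `(X₁,ρ₁)`. -/
structure IsCompression {X₁ X₂ : Type*} (ρ₁ : X₁ → X₁ → Prop)
    (ρ₂ : X₂ → X₂ → Prop) (θ : X₂ → X₁) : Prop where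
  surj : Function.Surjective θ
  mono : ∀ x y, ρ₂ x y → ρ₁ (θ x) (θ y)
  lift : ∀ a₁ a₂ a₃, ρ₁ a₁ a₂ → ρ₁ a₂ a₃ → ρ₁ a₁ a₃ →
    ∃ x₁ x₂ x₃, ρ₂ x₁ x₂ ∧ ρ₂ x₂ x₃ ∧ ρ₂ x₁ x₃ ∧
      θ x₁ = a₁ ∧ θ x₂ = a₂ ∧ θ x₃ = a₃
  bij : Set.BijOn (fun p : X₂ × X₂ => (θ p.1, θ p.2))
    {p | ρ₂ p.1 p.2 ∧ p.1 ≠ p.2} {q | ρ₁ q.1 q.2 ∧ q.1 ≠ q.2}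

/-- `σ ⊆ ρ` is a `G`-grading set for `ρ`: every function `φ : σ → G`
extends to a homomorphism `Φ : ρ → G` which is unique on `ρ`. -/
def IsGradingSet (G : Type*) [Mul G] {X : Type*} (ρ : X → X → Prop)
    (σ : Set (X × X)) : Prop :=
  (∀ p ∈ σ, ρ p.1 p.2) ∧
  ∀ φ : X × X → G, ∃ Φ : X → X → G,
    IsRelHom ρ Φ ∧ (∀ p ∈ σ, Φ p.1 p.2 = φ p) ∧
    ∀ Ψ : X → X → G, IsRelHom ρ Ψ → (∀ p ∈ σ, Ψ p.1 p.2 = φ p) →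
      ∀ x y, ρ x y → Ψ x y = Φ x y

/-- The map `h : I(X₁,ρ₁,R) → I(X₂,ρ₂,R)` induced by a compression `θ : X₂ → X₁`. -/
noncomputable def compressMap {X₁ X₂ : Type*} (R : Type*) [Ring R]
    (ρ₂ : X₂ → X₂ → Prop) (θ : X₂ → X₁) (f : X₁ → X₁ → R) : X₂ → X₂ → R :=
  fun x y => if ρ₂ x y then f (θ x) (θ y) else 0

/-- A transitive triple: `a ρ b`, `b ρ c`, `a ρ c`. -/
def TransTriple {X : Type*} (ρ : X → X → Prop) (a b c : X) : Prop :=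
  ρ a b ∧ ρ b c ∧ ρ a c

/-- A stable relation: balanced, and for all pairwise distinct `a,b,c,d`,
`a ρ b`, `a ρ c`, `b ρ c`, `b ρ d`, `c ρ d` imply `a ρ d`. -/
def RelStable {X : Type*} (ρ : X → X → Prop) : Prop :=
  RelBalanced ρ ∧
  ∀ a b c d : X, a ≠ b → a ≠ c → a ≠ d → b ≠ c → b ≠ d → c ≠ d →
    ρ a b → ρ a c → ρ b c → ρ b d → ρ c d → ρ a d

/-- `x` is a clasp. -/
def IsClasp {X : Type*} (ρ : X → X → Prop) (x : X) : Prop :=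
  ∃ w y, w ≠ x ∧ y ≠ x ∧ ρ w x ∧ ρ x y ∧ ¬ ρ w y

/-- `x` is a locked clasp. -/
def IsLockedClasp {X : Type*} (ρ : X → X → Prop) (x : X) : Prop :=
  ∃ u v w y : X, u ≠ x ∧ v ≠ x ∧ w ≠ x ∧ y ≠ x ∧ ¬ ρ w y ∧
    TransTriple ρ u x y ∧ TransTriple ρ u x v ∧ TransTriple ρ w x v

/-- `A` is a cross-cut for the (pre)order `ρ` on `X`. -/
def IsCrossCut {X : Type*} (ρ : X → X → Prop) (A : Set X) : Prop :=
  (∀ a ∈ A, ∀ b ∈ A, a ≠ b → ¬ ρ a b ∧ ¬ ρ b a) ∧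
  (∀ x : X, ∃ a ∈ A, ρ x a ∨ ρ a x) ∧
  (∀ C : Set X, IsChain ρ C → ∃ C', C ⊆ C' ∧ IsChain ρ C' ∧ (A ∩ C').Nonempty)

/-- the convolution product on `I(X,ρ,R)` is associative. -/
theorem convolution_assoc {X R : Type*} [Ring R] (ρ : X → X → Prop)
    (hlf : RelLocallyFinite ρ) (hbal : RelBalanced ρ)
    (f g h : X → X → R) (hf : f ∈ IncFun ρ R) (hg : g ∈ IncFun ρ R)
    (hh : h ∈ IncFun ρ R) :
    conv ρ (conv ρ f g) h = conv ρ f (conv ρ g h) := by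
  obtain ⟨hrefl, hbal4⟩ := hbal
  funext x y
  by_cases hxy : ρ x y
  · have hI := hlf x y
    simp only [conv, if_pos hxy]
    rw [finsum_mem_eq_finite_toFinset_sum _ hI, finsum_mem_eq_finite_toFinset_sum _ hI]
    have hmemI : ∀ z, z ∈ hI.toFinset ↔ ρ x z ∧ ρ z y := by
      intro z; rw [Set.Finite.mem_toFinset]; rfl
    have hL : ∀ z ∈ hI.toFinset,
        (if ρ x z then ∑ᶠ w ∈ RelInterval ρ x z, f x w * g w z else 0) * h z y
          = ∑ w ∈ hI.toFinset.filter (fun w => ρ w z), f x w * g w z * h z y := by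
      intro z hz
      obtain ⟨hxz, hzy⟩ := (hmemI z).mp hz
      rw [if_pos hxz, finsum_mem_eq_finite_toFinset_sum _ (hlf x z), Finset.sum_mul]
      apply Finset.sum_congr _ (fun _ _ => rfl)
      ext w
      simp only [Set.Finite.mem_toFinset, Finset.mem_filter, hmemI]
      constructor
      · rintro ⟨hxw, hwz⟩
        exact ⟨⟨hxw, (hbal4 x w z y hxw hwz hzy hxy).mp hxz⟩, hwz⟩
      · rintro ⟨⟨hxw, _⟩, hwz⟩; exact ⟨hxw, hwz⟩
    have hR : ∀ w ∈ hI.toFinset,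
        f x w * (if ρ w y then ∑ᶠ z ∈ RelInterval ρ w y, g w z * h z y else 0)
          = ∑ z ∈ hI.toFinset.filter (fun z => ρ w z), f x w * (g w z * h z y) := by
      intro w hw
      obtain ⟨hxw, hwy⟩ := (hmemI w).mp hw
      rw [if_pos hwy, finsum_mem_eq_finite_toFinset_sum _ (hlf w y), Finset.mul_sum]
      apply Finset.sum_congr _ (fun _ _ => rfl)
      ext z
      simp only [Set.Finite.mem_toFinset, Finset.mem_filter, hmemI]
      constructor
      · rintro ⟨hwz, hzy⟩
        exact ⟨⟨(hbal4 x w z y hxw hwz hzy hxy).mpr hwy, hzy⟩, hwz⟩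
      · rintro ⟨⟨_, hzy⟩, hwz⟩; exact ⟨hwz, hzy⟩
    rw [Finset.sum_congr rfl hL, Finset.sum_congr rfl hR]
    rw [Finset.sum_comm' (t' := hI.toFinset)
      (s' := fun w => hI.toFinset.filter (fun z => ρ w z))]
    · exact Finset.sum_congr rfl fun z _ =>
        Finset.sum_congr rfl fun w _ => mul_assoc _ _ _
    · intro w z
      simp only [Finset.mem_filter]
      tauto
  · simp only [conv, if_neg hxy]
end

section
/- Let ρ be a locally finite balanced relation on a set X, let R be a nontrivial associative ring with unity, let G be a semigroup, and let Φ : ρ → G be a homomorphism. For a ∈ G set S_a = {f ∈ I(X,ρ,R) : for all x,y with x ρ y, f(x,y) ≠ 0 implies Φ(x,y) = a}. Then I(X,ρ,R) is the internal direct sum of the additive subgroups S_a (a ∈ G) — i.e., every element of I(X,ρ,R) is uniquely a sum of finitely many nonzero elements taken from distinct S_a — if and only if the image of Φ is a finite subset of G. -/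
open scoped Classical

universe u v

/-- Helper: any graded decomposition of `f` has `t (Φ x y) x y = f x y`. -/
lemma decomp_val {X R G : Type*} [Ring R] (ρ : X → X → Prop) (Φ : X → X → G)
    (f : X → X → R) (t : G →₀ (X → X → R))
    (hmem : ∀ a, t a ∈ gradeSet R ρ Φ a)
    (hsum : (t.sum fun _ v => v) = f) (x y : X) :
    t (Φ x y) x y = f x y := by
  have h1 : (t.sum fun _ v => v) x y = ∑ a ∈ t.support, t a x y := by
    rw [Finsupp.sum]; simp
  rw [hsum] at h1
  rw [h1]
  symm
  apply Finset.sum_eq_single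
  · intro a _ hne
    by_contra h0
    exact hne ((hmem a).2 x y h0).symm
  · intro hns
    rw [Finsupp.notMem_support_iff.1 hns]
    simp

/-- Helper: off-grade components vanish. -/
lemma decomp_val_ne {X R G : Type*} [Ring R] (ρ : X → X → Prop) (Φ : X → X → G)
    (t : G →₀ (X → X → R)) (hmem : ∀ a, t a ∈ gradeSet R ρ Φ a)
    {a : G} {x y : X} (hne : a ≠ Φ x y) : t a x y = 0 := by
  by_contra h0
  exact hne ((hmem a).2 x y h0).symm

/-- `I(X,ρ,R)` is the internal direct sum of the components `S_a`
(every element decomposes uniquely) if and only if the image of `Φ` is finite. -/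
theorem directSum_iff_image_finite {X R G : Type*} [Ring R] [Nontrivial R]
    [Semigroup G] (ρ : X → X → Prop)
    (hlf : RelLocallyFinite ρ) (hbal : RelBalanced ρ)
    (Φ : X → X → G) (hΦ : IsRelHom ρ Φ) :
    (∀ f ∈ IncFun ρ R, ∃! s : G →₀ (X → X → R),
        (∀ a, s a ∈ gradeSet R ρ Φ a) ∧ (s.sum fun _ v => v) = f) ↔
      (RelImage ρ Φ).Finite := by
  constructor
  · intro h
    obtain ⟨s, ⟨hmem, hsum⟩, -⟩ := h (fun x y => if ρ x y then (1 : R) else 0)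
      (by intro x y hxy; by_contra hρ; simp [hρ] at hxy)
    apply Set.Finite.subset s.support.finite_toSet
    rintro a ⟨x, y, hxy, rfl⟩
    have h1 : s (Φ x y) x y = (if ρ x y then (1 : R) else 0) :=
      decomp_val ρ Φ _ s hmem hsum x y
    rw [if_pos hxy] at h1
    have hne : s (Φ x y) ≠ 0 := fun h0 => by simp [h0] at h1
    exact Finsupp.mem_support_iff.2 hne
  · intro hfin f hf
    set comp : G → X → X → R :=
      fun a x y => if ρ x y ∧ Φ x y = a then f x y else 0 with hcomp
    have hsupp : ∀ a, comp a ≠ 0 → a ∈ hfin.toFinset := by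
      intro a ha
      have : ∃ x y, comp a x y ≠ 0 := by
        by_contra hc
        push_neg at hc
        exact ha (by funext x y; exact hc x y)
      obtain ⟨x, y, hxy⟩ := this
      rw [hcomp] at hxy
      by_cases hρ : ρ x y ∧ Φ x y = a
      · exact hfin.mem_toFinset.2 ⟨x, y, hρ.1, hρ.2⟩
      · simp [hρ] at hxy
    refine ⟨Finsupp.onFinset hfin.toFinset comp hsupp, ⟨?_, ?_⟩, ?_⟩
    · intro a
      constructor
      · intro x y hxy
        simp only [Finsupp.onFinset_apply, hcomp] at hxy
        by_cases hρ : ρ x y ∧ Φ x y = a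
        · exact hρ.1
        · simp [hρ] at hxy
      · intro x y hxy
        simp only [Finsupp.onFinset_apply, hcomp] at hxy
        by_cases hρ : ρ x y ∧ Φ x y = a
        · exact hρ.2
        · simp [hρ] at hxy
    · funext x y
      have h1 : ((Finsupp.onFinset hfin.toFinset comp hsupp).sum fun _ v => v) x y
          = ∑ a ∈ (Finsupp.onFinset hfin.toFinset comp hsupp).support,
              (Finsupp.onFinset hfin.toFinset comp hsupp) a x y := by
        rw [Finsupp.sum]; simp
      rw [h1]
      rw [Finset.sum_eq_single (Φ x y)]
      · simp only [Finsupp.onFinset_apply, hcomp]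
        by_cases hρ : ρ x y
        · simp [hρ]
        · have : f x y = 0 := by
            by_contra h0
            exact hρ (hf x y h0)
          simp [hρ, this]
      · intro a _ hne
        simp only [Finsupp.onFinset_apply, hcomp]
        have : ¬ (ρ x y ∧ Φ x y = a) := fun hc => hne hc.2.symm
        simp [this]
      · intro hns
        rw [Finsupp.notMem_support_iff.1 hns]
        simp
    · intro t ⟨htmem, htsum⟩
      have hsmem : ∀ a, (Finsupp.onFinset hfin.toFinset comp hsupp) a
          ∈ gradeSet R ρ Φ a := by
        intro a
        constructor
        · intro x y hxy
          simp only [Finsupp.onFinset_apply, hcomp] at hxy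
          by_cases hρ : ρ x y ∧ Φ x y = a
          · exact hρ.1
          · simp [hρ] at hxy
        · intro x y hxy
          simp only [Finsupp.onFinset_apply, hcomp] at hxy
          by_cases hρ : ρ x y ∧ Φ x y = a
          · exact hρ.2
          · simp [hρ] at hxy
      have hssum : ((Finsupp.onFinset hfin.toFinset comp hsupp).sum fun _ v => v) = f := by
        funext x y
        have h1 : ((Finsupp.onFinset hfin.toFinset comp hsupp).sum fun _ v => v) x y
            = ∑ a ∈ (Finsupp.onFinset hfin.toFinset comp hsupp).support,
                (Finsupp.onFinset hfin.toFinset comp hsupp) a x y := by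
          rw [Finsupp.sum]; simp
        rw [h1]
        rw [Finset.sum_eq_single (Φ x y)]
        · simp only [Finsupp.onFinset_apply, hcomp]
          by_cases hρ : ρ x y
          · simp [hρ]
          · have : f x y = 0 := by
              by_contra h0
              exact hρ (hf x y h0)
            simp [hρ, this]
        · intro a _ hne
          simp only [Finsupp.onFinset_apply, hcomp]
          have : ¬ (ρ x y ∧ Φ x y = a) := fun hc => hne hc.2.symm
          simp [this]
        · intro hns
          rw [Finsupp.notMem_support_iff.1 hns]
          simp
      ext a x y
      by_cases ha : a = Φ x y
      · subst ha
        rw [decomp_val ρ Φ f t htmem htsum x y,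
          decomp_val ρ Φ f _ hsmem hssum x y]
      · rw [decomp_val_ne ρ Φ t htmem ha, decomp_val_ne ρ Φ _ hsmem ha]
end

section
/- Let ρ be a locally finite balanced relation on a set X, let R be a nontrivial associative ring with unity, let G be a monoid, and suppose S = I(X,ρ,R) = ⊕_{a∈G} S_a is a good G-graded ring. Then the function Φ : ρ → G defined by Φ(x,y) = ∂e_{xy} (the degree of the homogeneous element e_{xy}) for all x,y with x ρ y is a homomorphism, i.e., Φ(x,y)Φ(y,z) = Φ(x,z) whenever x ρ y, y ρ z, and x ρ z. -/
open scoped Classical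

universe u v

lemma conv_eUnit_eUnit {X R : Type*} [Ring R] (ρ : X → X → Prop)
    {x y z : X} (hxy : ρ x y) (hyz : ρ y z) (hxz : ρ x z) :
    conv ρ (eUnit R x y) (eUnit R y z) = eUnit R x z := by
  funext i j
  unfold conv eUnit
  by_cases hij : ρ i j
  · rw [if_pos hij]
    by_cases h : i = x ∧ j = z
    · obtain ⟨rfl, rfl⟩ := h
      rw [if_pos ⟨rfl, rfl⟩, finsum_mem_def]
      rw [finsum_eq_single _ y]
      · rw [Set.indicator_of_mem (show y ∈ RelInterval ρ i j from ⟨hxy, hyz⟩)]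
        simp
      · intro w hw
        rw [Set.indicator_apply]
        split
        · simp [hw]
        · rfl
    · rw [if_neg h]
      apply finsum_mem_of_eqOn_zero
      intro w _
      by_cases hw : w = y
      · subst hw
        rcases not_and_or.mp h with h' | h' <;> simp [h']
      · simp [hw]
  · rw [if_neg hij, eq_comm, ite_eq_right_iff]
    rintro ⟨rfl, rfl⟩
    exact absurd hxz hij

lemma eUnit_ne_zero {X R : Type*} [Ring R] [Nontrivial R] (x y : X) :
    eUnit R x y ≠ 0 := by
  intro h
  have := congrFun (congrFun h x) y
  simp [eUnit] at this

/-- for a good `G`-grading of `I(X,ρ,R)`, the degree map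
`Φ(x,y) = ∂e_{xy}` is a homomorphism `ρ → G`. -/
theorem good_grading_degree_isRelHom {X R G : Type*} [Ring R] [Nontrivial R]
    [Monoid G] (ρ : X → X → Prop)
    (hlf : RelLocallyFinite ρ) (hbal : RelBalanced ρ)
    (S : G → AddSubgroup (X → X → R))
    (hsub : ∀ a, (S a : Set (X → X → R)) ⊆ IncFun ρ R)
    (hdsum : ∀ f ∈ IncFun ρ R, ∃! s : G →₀ (X → X → R),
        (∀ a, s a ∈ S a) ∧ (s.sum fun _ v => v) = f)
    (hmul : ∀ a b : G, ∀ f ∈ S a, ∀ g ∈ S b, conv ρ f g ∈ S (a * b))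
    (deg : X → X → G)
    (hgood : ∀ x y, ρ x y → eUnit R x y ∈ S (deg x y)) :
    IsRelHom ρ deg := by
  intro x y z hxy hyz hxz
  have h1 : eUnit R x z ∈ S (deg x y * deg y z) := by
    have := hmul _ _ _ (hgood x y hxy) _ (hgood y z hyz)
    rwa [conv_eUnit_eUnit ρ hxy hyz hxz] at this
  have h2 : eUnit R x z ∈ S (deg x z) := hgood x z hxz
  obtain ⟨s, _, huniq⟩ := hdsum _ (hsub _ h2)
  have key : ∀ a : G, eUnit R x z ∈ S a →
      s = Finsupp.single a (eUnit R x z) := by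
    intro a ha
    refine (huniq _ ⟨?_, ?_⟩).symm
    · intro c
      rw [Finsupp.single_apply]
      split
      · next h => exact h ▸ ha
      · exact (S c).zero_mem
    · exact Finsupp.sum_single_index rfl
  have := (key _ h1).symm.trans (key _ h2)
  rcases (Finsupp.single_eq_single_iff _ _ _ _).mp this with ⟨h, _⟩ | ⟨h, _⟩
  · exact h
  · exact absurd h (eUnit_ne_zero x z)
end

section
/- Let ρ₁ and ρ₂ be reflexive relations on sets X₁ and X₂ respectively, let θ : X₂ → X₁ be a compression map, and let G be a cancellative monoid. Then there exists a G-grading set for ρ₁ if and only if there exists a G-grading set for ρ₂. -/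
open scoped Classical

universe u v

section AuxCompression

variable {X₁ X₂ : Type*} {G : Type*}

/-- A homomorphism into a cancellative monoid is `1` on the diagonal. -/
lemma relHom_diag_one [CancelMonoid G] {X : Type*} {ρ : X → X → Prop}
    (hr : ∀ x, ρ x x) {Φ : X → X → G} (h : IsRelHom ρ Φ) (x : X) : Φ x x = 1 := by
  have h1 : Φ x x * Φ x x = Φ x x * 1 := by
    rw [mul_one]; exact h x x x (hr x) (hr x) (hr x)
  exact mul_left_cancel h1

lemma comp_preimage {ρ₁ : X₁ → X₁ → Prop} {ρ₂ : X₂ → X₂ → Prop}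
    {θ : X₂ → X₁} (hθ : IsCompression ρ₁ ρ₂ θ) {a b : X₁}
    (hab : ρ₁ a b) (hne : a ≠ b) :
    ∃ p : X₂ × X₂, ρ₂ p.1 p.2 ∧ p.1 ≠ p.2 ∧ θ p.1 = a ∧ θ p.2 = b := by
  obtain ⟨p, hp, heq⟩ := hθ.bij.surjOn (show ((a, b) : X₁ × X₁) ∈ _ from ⟨hab, hne⟩)
  exact ⟨p, hp.1, hp.2, congrArg Prod.fst heq, congrArg Prod.snd heq⟩

lemma comp_ne {ρ₁ : X₁ → X₁ → Prop} {ρ₂ : X₂ → X₂ → Prop}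
    {θ : X₂ → X₁} (hθ : IsCompression ρ₁ ρ₂ θ) {x y : X₂}
    (h : ρ₂ x y) (hne : x ≠ y) : θ x ≠ θ y :=
  (hθ.bij.mapsTo (show ((x, y) : X₂ × X₂) ∈ _ from ⟨h, hne⟩)).2

lemma comp_inj {ρ₁ : X₁ → X₁ → Prop} {ρ₂ : X₂ → X₂ → Prop}
    {θ : X₂ → X₁} (hθ : IsCompression ρ₁ ρ₂ θ) {x y x' y' : X₂}
    (h : ρ₂ x y) (hne : x ≠ y) (h' : ρ₂ x' y') (hne' : x' ≠ y')
    (e1 : θ x = θ x') (e2 : θ y = θ y') : x = x' ∧ y = y' := by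
  have := hθ.bij.injOn (show ((x, y) : X₂ × X₂) ∈ _ from ⟨h, hne⟩)
    (show ((x', y') : X₂ × X₂) ∈ _ from ⟨h', hne'⟩)
    (by simp only [Prod.mk.injEq]; exact ⟨e1, e2⟩)
  exact ⟨congrArg Prod.fst this, congrArg Prod.snd this⟩

/-- Push a function on pairs of `X₂` down to `X₁` along a compression. -/
noncomputable def pushHom [One G] {ρ₁ : X₁ → X₁ → Prop} {ρ₂ : X₂ → X₂ → Prop}
    {θ : X₂ → X₁} (hθ : IsCompression ρ₁ ρ₂ θ) (Φ : X₂ → X₂ → G) (a b : X₁) : G :=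
  if h : ρ₁ a b ∧ a ≠ b then
    Φ (comp_preimage hθ h.1 h.2).choose.1 (comp_preimage hθ h.1 h.2).choose.2
  else 1

lemma pushHom_diag [One G] {ρ₁ : X₁ → X₁ → Prop} {ρ₂ : X₂ → X₂ → Prop}
    {θ : X₂ → X₁} (hθ : IsCompression ρ₁ ρ₂ θ) (Φ : X₂ → X₂ → G) (a : X₁) :
    pushHom hθ Φ a a = 1 := by
  rw [pushHom, dif_neg]; rintro ⟨-, h⟩; exact h rfl

lemma pushHom_eq [One G] {ρ₁ : X₁ → X₁ → Prop} {ρ₂ : X₂ → X₂ → Prop}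
    {θ : X₂ → X₁} (hθ : IsCompression ρ₁ ρ₂ θ) (Φ : X₂ → X₂ → G) {x y : X₂}
    (hxy : ρ₂ x y) (hne : x ≠ y) : pushHom hθ Φ (θ x) (θ y) = Φ x y := by
  have hab : ρ₁ (θ x) (θ y) := hθ.mono _ _ hxy
  have hne' : θ x ≠ θ y := comp_ne hθ hxy hne
  rw [pushHom, dif_pos ⟨hab, hne'⟩]
  obtain ⟨h1, h2, h3, h4⟩ :=
    (comp_preimage hθ (And.intro hab hne').1 (And.intro hab hne').2).choose_spec
  obtain ⟨e1, e2⟩ := comp_inj hθ h1 h2 hxy hne h3 h4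
  rw [e1, e2]

/-- Pull a homomorphism on `ρ₁` back to a homomorphism on `ρ₂`. -/
lemma hom_pull [CancelMonoid G] {ρ₁ : X₁ → X₁ → Prop} {ρ₂ : X₂ → X₂ → Prop}
    (hr₁ : ∀ x, ρ₁ x x) {θ : X₂ → X₁} (hθ : IsCompression ρ₁ ρ₂ θ)
    {Φ : X₁ → X₁ → G} (h : IsRelHom ρ₁ Φ) :
    IsRelHom ρ₂ (fun x y => if x = y then 1 else Φ (θ x) (θ y)) := by
  intro x y z hxy hyz hxz
  by_cases exy : x = y
  · subst exy; simp
  by_cases eyz : y = z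
  · subst eyz; simp
  by_cases exz : x = z
  · subst exz
    simp only [if_neg exy, if_neg eyz, if_pos rfl]
    have h1 := h (θ x) (θ y) (θ x) (hθ.mono _ _ hxy) (hθ.mono _ _ hyz) (hr₁ _)
    rw [h1, relHom_diag_one hr₁ h]
    simp
  · simp only [if_neg exy, if_neg eyz, if_neg exz]
    exact h _ _ _ (hθ.mono _ _ hxy) (hθ.mono _ _ hyz) (hθ.mono _ _ hxz)

/-- Pushing a homomorphism on `ρ₂` gives a homomorphism on `ρ₁`. -/
lemma hom_push [CancelMonoid G] {ρ₁ : X₁ → X₁ → Prop} {ρ₂ : X₂ → X₂ → Prop}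
    (hr₂ : ∀ x, ρ₂ x x) {θ : X₂ → X₁} (hθ : IsCompression ρ₁ ρ₂ θ)
    {Φ : X₂ → X₂ → G} (h : IsRelHom ρ₂ Φ) :
    IsRelHom ρ₁ (pushHom hθ Φ) := by
  intro a b c hab hbc hac
  by_cases eab : a = b
  · subst eab; rw [pushHom_diag, one_mul]
  by_cases ebc : b = c
  · subst ebc; rw [pushHom_diag, mul_one]
  by_cases eac : a = c
  · subst eac
    obtain ⟨x₁, x₂, x₃, h12, h23, h13, e1, e2, e3⟩ := hθ.lift a b a hab hbc hac
    have n12 : x₁ ≠ x₂ := fun e => eab (by rw [← e1, ← e2, e])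
    have n23 : x₂ ≠ x₃ := fun e => eab (by rw [← e3, ← e2, e])
    have e13 : x₁ = x₃ := by
      by_contra ne
      exact (comp_ne hθ h13 ne) (by rw [e1, e3])
    subst e13
    rw [pushHom_diag, ← e1, ← e2, pushHom_eq hθ Φ h12 n12,
      pushHom_eq hθ Φ h23 n23, h x₁ x₂ x₁ h12 h23 h13, relHom_diag_one hr₂ h]
  · obtain ⟨x₁, x₂, x₃, h12, h23, h13, e1, e2, e3⟩ := hθ.lift a b c hab hbc hac
    have n12 : x₁ ≠ x₂ := fun e => eab (by rw [← e1, ← e2, e])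
    have n23 : x₂ ≠ x₃ := fun e => ebc (by rw [← e2, ← e3, e])
    have n13 : x₁ ≠ x₃ := fun e => eac (by rw [← e1, ← e3, e])
    rw [← e1, ← e2, ← e3, pushHom_eq hθ Φ h12 n12, pushHom_eq hθ Φ h23 n23,
      pushHom_eq hθ Φ h13 n13]
    exact h _ _ _ h12 h23 h13

/-- If `G` is trivial, the empty set is a grading set for any relation. -/
lemma trivial_gradingSet {G : Type*} [Monoid G] (htriv : ∀ g : G, g = 1)
    {X : Type*} (ρ : X → X → Prop) : IsGradingSet G ρ (∅ : Set (X × X)) := by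
  refine ⟨fun p hp => absurd hp (Set.notMem_empty p),
    fun φ => ⟨fun _ _ => 1, ?_, ?_, ?_⟩⟩
  · intro x y z _ _ _; rw [mul_one]
  · intro p hp; exact absurd hp (Set.notMem_empty p)
  · intro Ψ _ _ x y _; exact htriv _

/-- If `G` is nontrivial, a grading set for a reflexive relation contains no
diagonal pair. -/
lemma gradingSet_no_diag {G : Type*} [CancelMonoid G] {X : Type*}
    {ρ : X → X → Prop} (hr : ∀ x, ρ x x) {σ : Set (X × X)}
    (hσ : IsGradingSet G ρ σ) {g₀ : G} (hg₀ : g₀ ≠ 1) {x : X}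
    (hx : (x, x) ∈ σ) : False := by
  obtain ⟨Φ, hΦ, hext, -⟩ := hσ.2 (fun _ => g₀)
  exact hg₀ ((hext _ hx).symm.trans (relHom_diag_one hr hΦ x))

end AuxCompression

/-- if `θ : X₂ → X₁` is a compression map between reflexive
relations and `G` is a cancellative monoid, then `ρ₁` has a `G`-grading set
if and only if `ρ₂` has a `G`-grading set. -/
theorem gradingSet_iff_of_compression {X₁ X₂ : Type*} (G : Type*) [CancelMonoid G]
    (ρ₁ : X₁ → X₁ → Prop) (ρ₂ : X₂ → X₂ → Prop)
    (hr₁ : ∀ x, ρ₁ x x) (hr₂ : ∀ x, ρ₂ x x)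
    (θ : X₂ → X₁) (hθ : IsCompression ρ₁ ρ₂ θ) :
    (∃ σ₁ : Set (X₁ × X₁), IsGradingSet G ρ₁ σ₁) ↔
      (∃ σ₂ : Set (X₂ × X₂), IsGradingSet G ρ₂ σ₂) := by
  by_cases htriv : ∀ g : G, g = 1
  · exact ⟨fun _ => ⟨∅, trivial_gradingSet htriv ρ₂⟩,
      fun _ => ⟨∅, trivial_gradingSet htriv ρ₁⟩⟩
  push_neg at htriv
  obtain ⟨g₀, hg₀⟩ := htriv
  constructor
  · rintro ⟨σ₁, hσ₁⟩
    refine ⟨{p : X₂ × X₂ | p.1 ≠ p.2 ∧ ρ₂ p.1 p.2 ∧ (θ p.1, θ p.2) ∈ σ₁},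
      fun p hp => hp.2.1, ?_⟩
    intro φ₂
    set φ₁ : X₁ × X₁ → G := fun q => pushHom hθ (fun x y => φ₂ (x, y)) q.1 q.2
      with hφ₁
    obtain ⟨Φ₁, hΦ₁hom, hΦ₁ext, hΦ₁uniq⟩ := hσ₁.2 φ₁
    refine ⟨fun x y => if x = y then 1 else Φ₁ (θ x) (θ y),
      hom_pull hr₁ hθ hΦ₁hom, ?_, ?_⟩
    · rintro ⟨x, y⟩ ⟨hne, hxy, hmem⟩
      simp only [if_neg hne]
      have h1 : Φ₁ (θ x) (θ y) = φ₁ (θ x, θ y) := hΦ₁ext _ hmem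
      rw [h1, hφ₁]
      exact pushHom_eq hθ _ hxy hne
    · intro Ψ₂ hΨ₂hom hΨ₂ext x y hxy
      have hΨ₁hom : IsRelHom ρ₁ (pushHom hθ Ψ₂) := hom_push hr₂ hθ hΨ₂hom
      have hΨ₁ext : ∀ p ∈ σ₁, pushHom hθ Ψ₂ p.1 p.2 = φ₁ p := by
        rintro ⟨a, b⟩ hmem
        by_cases hab : a = b
        · subst hab
          exact absurd hmem fun hm => gradingSet_no_diag hr₁ hσ₁ hg₀ hm
        · have hρab : ρ₁ a b := hσ₁.1 _ hmem
          obtain ⟨p, hp12, hpne, hp1, hp2⟩ := comp_preimage hθ hρab hab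
          have hmem₂ : p ∈ {p : X₂ × X₂ | p.1 ≠ p.2 ∧ ρ₂ p.1 p.2 ∧
              (θ p.1, θ p.2) ∈ σ₁} := ⟨hpne, hp12, by rw [hp1, hp2]; exact hmem⟩
          calc pushHom hθ Ψ₂ a b = Ψ₂ p.1 p.2 := by
                rw [← hp1, ← hp2, pushHom_eq hθ Ψ₂ hp12 hpne]
            _ = φ₂ p := hΨ₂ext p hmem₂
            _ = φ₁ (a, b) := by
                rw [hφ₁]
                simp only
                rw [← hp1, ← hp2, pushHom_eq hθ _ hp12 hpne]
      have huniq := hΦ₁uniq _ hΨ₁hom hΨ₁ext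
      by_cases hxyeq : x = y
      · subst hxyeq
        simp only [if_pos rfl]
        exact relHom_diag_one hr₂ hΨ₂hom x
      · simp only [if_neg hxyeq]
        rw [← pushHom_eq hθ Ψ₂ hxy hxyeq, huniq _ _ (hθ.mono _ _ hxy)]
  · rintro ⟨σ₂, hσ₂⟩
    refine ⟨{q : X₁ × X₁ | ∃ p ∈ σ₂, p.1 ≠ p.2 ∧ (θ p.1, θ p.2) = q}, ?_, ?_⟩
    · rintro q ⟨p, hp, hne, rfl⟩
      exact hθ.mono _ _ (hσ₂.1 _ hp)
    · intro φ₁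
      set φ₂ : X₂ × X₂ → G := fun p => φ₁ (θ p.1, θ p.2) with hφ₂
      obtain ⟨Φ₂, hΦ₂hom, hΦ₂ext, hΦ₂uniq⟩ := hσ₂.2 φ₂
      refine ⟨pushHom hθ Φ₂, hom_push hr₂ hθ hΦ₂hom, ?_, ?_⟩
      · rintro q ⟨p, hp, hne, rfl⟩
        rw [pushHom_eq hθ Φ₂ (hσ₂.1 _ hp) hne, hΦ₂ext _ hp]
      · intro Ψ₁ hΨ₁hom hΨ₁ext a b hab
        set Ψ₂ : X₂ → X₂ → G := fun x y => if x = y then 1 else Ψ₁ (θ x) (θ y)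
          with hΨ₂def
        have hΨ₂hom : IsRelHom ρ₂ Ψ₂ := hom_pull hr₁ hθ hΨ₁hom
        have hΨ₂ext : ∀ p ∈ σ₂, Ψ₂ p.1 p.2 = φ₂ p := by
          intro p hp
          have hne : p.1 ≠ p.2 := by
            intro e
            have hpp : p = (p.1, p.1) := Prod.ext_iff.mpr ⟨rfl, e.symm⟩
            rw [hpp] at hp
            exact gradingSet_no_diag hr₂ hσ₂ hg₀ hp
          rw [hΨ₂def]
          simp only [if_neg hne]
          exact hΨ₁ext _ ⟨p, hp, hne, rfl⟩
        have huniq := hΦ₂uniq _ hΨ₂hom hΨ₂ext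
        by_cases hab' : a = b
        · subst hab'
          rw [pushHom_diag]
          exact relHom_diag_one hr₁ hΨ₁hom a
        · obtain ⟨p, hp12, hpne, hp1, hp2⟩ := comp_preimage hθ hab hab'
          have h1 : Ψ₁ a b = Ψ₂ p.1 p.2 := by
            rw [hΨ₂def]
            simp only [if_neg hpne]
            rw [hp1, hp2]
          rw [h1, huniq _ _ hp12, ← hp1, ← hp2, pushHom_eq hθ Φ₂ hp12 hpne]
end

section
/- Let ρ be a stable relation on a finite set X such that every clasp in X is unlocked, and let R be an associative ring with unity. Then there exist a preorder ≤ on a finite set Y, a compression map θ : Y → X, and an injective ring homomorphism h : I(X,ρ,R) → I(Y,≤,R) (additive, multiplicative for the convolution products, and sending the identity to the identity). -/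
open scoped Classical

universe u v

/-!
The preorder `Y` unfolds `ρ` along its arrows. Every arrow `a → b` (`a ρ b`, `a ≠ b`) contributes
a tail over `a` and a head over `b`, with tail `≤` head, and every isolated point of `X` contributes
one point. Endpoints over the same point `x` are glued exactly when transitivity forces it: the head
of `w → x` and the tail of `x → y` when `w ρ y`; the tails of `x → y` and `x → y'` when every
in-neighbour of `x` sees `y` and `y'` alike; dually for heads. Unlockedness of the clasps is what
makes this gluing transitive, and stability together with balance make `θ` map every interval
`[u, v]` of `Y` bijectively onto `[θ u, θ v]`. Consequently `f ↦ (u ≤ v ↦ f (θ u) (θ v))` is an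
injective ring homomorphism of the incidence rings.
-/

structure IsIntervalCompression {X Y : Type*} (ρ : X → X → Prop) (le : Y → Y → Prop)
    (θ : Y → X) : Prop extends IsCompression ρ le θ where
  bijOn_interval : ∀ u v, le u v →
    Set.BijOn θ (RelInterval le u v) (RelInterval ρ (θ u) (θ v))

section Compression

variable {X Y Y' : Type*} {ρ : X → X → Prop} {le : Y → Y → Prop} {θ : Y → X}

theorem exists_rel_lift (hrefl : ∀ y, le y y) (hsurj : Function.Surjective θ)
    (hpairs : Set.SurjOn (fun p : Y × Y => (θ p.1, θ p.2))
      {p | le p.1 p.2 ∧ p.1 ≠ p.2} {q | ρ q.1 q.2 ∧ q.1 ≠ q.2})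
    {a b : X} (hab : ρ a b) : ∃ u v, le u v ∧ θ u = a ∧ θ v = b := by
  by_cases h : a = b
  · obtain ⟨u, rfl⟩ := hsurj a
    exact ⟨u, u, hrefl u, rfl, h⟩
  · obtain ⟨⟨u, v⟩, ⟨huv, -⟩, he⟩ := hpairs (a := (a, b)) ⟨hab, h⟩
    exact ⟨u, v, huv, congrArg Prod.fst he, congrArg Prod.snd he⟩

theorem IsIntervalCompression.of_bijOn (hrefl : ∀ y, le y y) (hsurj : Function.Surjective θ)
    (hpairs : Set.BijOn (fun p : Y × Y => (θ p.1, θ p.2))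
      {p | le p.1 p.2 ∧ p.1 ≠ p.2} {q | ρ q.1 q.2 ∧ q.1 ≠ q.2})
    (hint : ∀ u v, le u v → Set.BijOn θ (RelInterval le u v) (RelInterval ρ (θ u) (θ v))) :
    IsIntervalCompression ρ le θ where
  surj := hsurj
  mono u v huv := ((hint u v huv).mapsTo ⟨hrefl u, huv⟩).2
  lift a b c hab hbc hac := by
    obtain ⟨u, w, huw, rfl, rfl⟩ := exists_rel_lift hrefl hsurj hpairs.surjOn hac
    obtain ⟨v, ⟨huv, hvw⟩, rfl⟩ := (hint u w huw).surjOn ⟨hab, hbc⟩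
    exact ⟨u, v, w, huv, hvw, huw, rfl, rfl, rfl⟩
  bij := hpairs
  bijOn_interval := hint

theorem IsIntervalCompression.comp_equiv (hθ : IsIntervalCompression ρ le θ) (e : Y' ≃ Y) :
    IsIntervalCompression ρ (fun a b => le (e a) (e b)) (θ ∘ e) where
  surj := hθ.surj.comp e.surjective
  mono _ _ h := hθ.mono _ _ h
  lift a b c hab hbc hac := by
    obtain ⟨x₁, x₂, x₃, h₁₂, h₂₃, h₁₃, rfl, rfl, rfl⟩ := hθ.lift a b c hab hbc hac
    exact ⟨e.symm x₁, e.symm x₂, e.symm x₃, by simpa using h₁₂, by simpa using h₂₃,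
      by simpa using h₁₃, by simp, by simp, by simp⟩
  bij := by
    have hpre : {p : Y' × Y' | le (e p.1) (e p.2) ∧ p.1 ≠ p.2} =
        Prod.map e e ⁻¹' {p | le p.1 p.2 ∧ p.1 ≠ p.2} := by
      ext p
      simp
    rw [hpre]
    exact hθ.bij.comp (e.prodCongr e).bijective.bijOn_preimage
  bijOn_interval u v huv :=
    (hθ.bijOn_interval _ _ huv).comp (e.bijective.bijOn_preimage (t := RelInterval le (e u) (e v)))

theorem IsCompression.eq_of_rel_of_eq (hθ : IsCompression ρ le θ) {u v : Y} (huv : le u v)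
    (h : θ u = θ v) : u = v := by
  by_contra hne
  exact (hθ.bij.mapsTo (x := (u, v)) ⟨huv, hne⟩).2 h

end Compression

section IncidenceRing

variable {X Y : Type*} {R : Type*} [Ring R] {ρ : X → X → Prop} {le : Y → Y → Prop} {θ : Y → X}

theorem compressMap_mem_incFun (f : X → X → R) : compressMap R le θ f ∈ IncFun le R := by
  intro u v h
  by_contra huv
  simp [compressMap, huv] at h

theorem compressMap_add (f g : X → X → R) :
    compressMap R le θ (f + g) = compressMap R le θ f + compressMap R le θ g := by
  funext u v
  by_cases h : le u v <;> simp [compressMap, h]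

theorem IsIntervalCompression.compressMap_conv (hθ : IsIntervalCompression ρ le θ)
    (f g : X → X → R) :
    compressMap R le θ (conv ρ f g) = conv le (compressMap R le θ f) (compressMap R le θ g) := by
  funext u v
  by_cases huv : le u v
  · simp only [compressMap, conv, if_pos huv, if_pos (hθ.mono u v huv)]
    refine (finsum_mem_eq_of_bijOn θ (hθ.bijOn_interval u v huv) fun t ht => ?_).symm
    rw [if_pos ht.1, if_pos ht.2]
  · simp only [compressMap, conv, if_neg huv]

variable (R)

theorem IsCompression.compressMap_eId (hθ : IsCompression ρ le θ) (hrefl : ∀ y, le y y) :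
    compressMap R le θ (eId X R) = eId Y R := by
  funext u v
  by_cases huv : le u v
  · have : θ u = θ v ↔ u = v := ⟨hθ.eq_of_rel_of_eq huv, congrArg θ⟩
    simp [compressMap, eId, huv, this]
  · have : u ≠ v := fun h => huv (h ▸ hrefl u)
    simp [compressMap, eId, huv, this]

theorem IsCompression.compressMap_injOn (hθ : IsCompression ρ le θ) (hrefl : ∀ y, le y y) :
    Set.InjOn (compressMap R le θ) (IncFun ρ R) := by
  intro f hf g hg hfg
  funext a b
  by_cases hab : ρ a b
  · obtain ⟨u, v, huv, rfl, rfl⟩ := exists_rel_lift hrefl hθ.surj hθ.bij.surjOn hab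
    simpa [compressMap, huv] using congrFun (congrFun hfg u) v
  · rw [not_imp_comm.1 (hf a b) hab, not_imp_comm.1 (hg a b) hab]

end IncidenceRing

section StableRelation

variable {X : Type*} {ρ : X → X → Prop}

def ClaspsUnlocked (ρ : X → X → Prop) : Prop :=
  ∀ x, IsClasp ρ x → ¬ IsLockedClasp ρ x

theorem RelStable.rel_of_ne (hρ : RelStable ρ) {a b c d : X} (hne : b ≠ c) (hab : ρ a b)
    (hac : ρ a c) (hbc : ρ b c) (hbd : ρ b d) (hcd : ρ c d) : ρ a d := by
  by_cases had : a = d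
  · exact had ▸ hρ.1.1 a
  by_cases hcd' : c = d
  · exact hcd' ▸ hac
  by_cases hac' : a = c
  · exact hac' ▸ hcd
  by_cases hab' : a = b
  · exact hab' ▸ hbd
  by_cases hbd' : b = d
  · exact hbd' ▸ hab
  exact hρ.2 a b c d hab' hac' had hne hbd' hcd' hab hac hbc hbd hcd

theorem rel_of_not_isLockedClasp (hC : ClaspsUnlocked ρ)
    {x u v w y : X} (hu : u ≠ x) (hv : v ≠ x) (hw : w ≠ x) (hy : y ≠ x)
    (hux : ρ u x) (hwx : ρ w x) (hxv : ρ x v) (hxy : ρ x y)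
    (huv : ρ u v) (huy : ρ u y) (hwv : ρ w v) : ρ w y := by
  by_contra hwy
  exact hC x ⟨w, y, hw, hy, hwx, hxy, hwy⟩
    ⟨u, v, w, y, hu, hv, hw, hy, hwy, ⟨hux, hxy, huy⟩, ⟨hux, hxv, huv⟩, ⟨hwx, hxv, hwv⟩⟩

end StableRelation

namespace Unfolding

variable {X : Type u} (ρ : X → X → Prop)

@[ext]
structure Arrow where
  src : X
  tgt : X
  rel : ρ src tgt
  ne : src ≠ tgt

def Isolated : Type u := {x : X // ¬ ∃ z, z ≠ x ∧ (ρ z x ∨ ρ x z)}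

inductive Endpoint : Type u
  | tail : Arrow ρ → Endpoint
  | head : Arrow ρ → Endpoint
  | isolated : Isolated ρ → Endpoint

instance [Finite X] : Finite (Arrow ρ) :=
  Finite.of_injective (fun e => (e.src, e.tgt)) fun _ _ h =>
    Arrow.ext (congrArg Prod.fst h) (congrArg Prod.snd h)

instance [Finite X] : Finite (Isolated ρ) := Subtype.finite

instance [Finite X] : Finite (Endpoint ρ) :=
  Finite.of_surjective (Sum.elim Endpoint.tail (Sum.elim Endpoint.head Endpoint.isolated))
    (by rintro (e | e | a)
        exacts [⟨.inl e, rfl⟩, ⟨.inr (.inl e), rfl⟩, ⟨.inr (.inr a), rfl⟩])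

variable {ρ}

def Endpoint.base : Endpoint ρ → X
  | .tail e => e.src
  | .head e => e.tgt
  | .isolated a => a.1

variable (ρ) in
def Glued : Endpoint ρ → Endpoint ρ → Prop
  | .tail e, .tail f => e.src = f.src ∧ ∀ w, w ≠ e.src → ρ w e.src → (ρ w e.tgt ↔ ρ w f.tgt)
  | .tail e, .head f => e.src = f.tgt ∧ ρ f.src e.tgt
  | .head e, .tail f => e.tgt = f.src ∧ ρ e.src f.tgt
  | .head e, .head f => e.tgt = f.tgt ∧ ∀ y, y ≠ e.tgt → ρ e.tgt y → (ρ e.src y ↔ ρ f.src y)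
  | .isolated a, .isolated b => a.1 = b.1
  | _, _ => False

theorem glued_refl (p : Endpoint ρ) : Glued ρ p p := by
  cases p <;> simp [Glued]

theorem glued_symm : ∀ {p q : Endpoint ρ}, Glued ρ p q → Glued ρ q p := by
  rintro (e | e | a) (f | f | b) h <;> simp only [Glued] at h ⊢
  · exact ⟨h.1.symm, fun w hw hwa => (h.2 w (h.1 ▸ hw) (h.1 ▸ hwa)).symm⟩
  · exact ⟨h.1.symm, h.2⟩
  · exact ⟨h.1.symm, h.2⟩
  · exact ⟨h.1.symm, fun y hy hby => (h.2 y (h.1 ▸ hy) (h.1 ▸ hby)).symm⟩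
  · exact h.symm

theorem glued_trans (hC : ClaspsUnlocked ρ) :
    ∀ {p q r : Endpoint ρ}, Glued ρ p q → Glued ρ q r → Glued ρ p r := by
  rintro (⟨a, b, hab, nab⟩ | ⟨a, b, hab, nab⟩ | ⟨a, ha⟩)
    (⟨c, d, hcd, ncd⟩ | ⟨c, d, hcd, ncd⟩ | ⟨c, hc⟩)
    (⟨e, f, hef, nef⟩ | ⟨e, f, hef, nef⟩ | ⟨e, he⟩) h₁ h₂ <;>
    simp only [Glued] at h₁ h₂ ⊢
  all_goals first
    | exact h₁.trans h₂
    | obtain ⟨rfl, H₁⟩ := h₁; obtain ⟨rfl, H₂⟩ := h₂; refine ⟨rfl, ?_⟩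
  · exact fun w hw hwa => (H₁ w hw hwa).trans (H₂ w hw hwa)
  · exact (H₁ e nef hef).2 H₂
  · exact fun w hw hwa => ⟨fun hwb => rel_of_not_isLockedClasp hC ncd (Ne.symm nab)
      hw (Ne.symm nef) hcd hwa hab hef H₁ H₂ hwb, fun hwf => rel_of_not_isLockedClasp hC ncd
      (Ne.symm nef) hw (Ne.symm nab) hcd hwa hef hab H₂ H₁ hwf⟩
  · exact (H₂ b (Ne.symm nab) hab).1 H₁
  · exact (H₂ a nab hab).1 H₁
  · exact fun y hy hby => ⟨fun hay => rel_of_not_isLockedClasp hC nab (Ne.symm ncd) nef hy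
      hab hef hcd hby H₁ hay H₂, fun hey => rel_of_not_isLockedClasp hC nef (Ne.symm ncd) nab
      hy hef hab hcd hby H₂ hey H₁⟩
  · exact (H₁ f (Ne.symm nef) hef).2 H₂
  · exact fun y hy hby => (H₁ y hy hby).trans (H₂ y hy hby)

theorem base_eq_of_glued : ∀ {p q : Endpoint ρ}, Glued ρ p q → p.base = q.base := by
  rintro (e | e | a) (f | f | b) h <;> simp only [Glued, Endpoint.base] at h ⊢
  all_goals first | exact h.1 | exact h

theorem glued_of_transTriple (hρ : RelStable ρ) {a b c : X} (hab : ρ a b) (hbc : ρ b c)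
    (hac : ρ a c) (nab : a ≠ b) (nbc : b ≠ c) (nac : a ≠ c) :
    Glued ρ (.tail ⟨a, b, hab, nab⟩) (.tail ⟨a, c, hac, nac⟩) ∧
      Glued ρ (.head ⟨a, b, hab, nab⟩) (.tail ⟨b, c, hbc, nbc⟩) ∧
      Glued ρ (.head ⟨b, c, hbc, nbc⟩) (.head ⟨a, c, hac, nac⟩) :=
  ⟨⟨rfl, fun w _ hwa => ⟨fun hwb => hρ.rel_of_ne nab hwa hwb hab hac hbc,
      fun hwc => (hρ.1.2 w a b c hwa hab hbc hwc).2 hac⟩⟩,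
    ⟨rfl, hac⟩,
    ⟨rfl, fun y _ hcy => ⟨fun hby => hρ.rel_of_ne nbc hab hac hbc hby hcy,
      fun hay => (hρ.1.2 a b c y hab hbc hcy hay).1 hac⟩⟩⟩

theorem glued_tail_of_rel_of_rel (hρ : RelStable ρ) (hC : ClaspsUnlocked ρ) {a z : X}
    (naz : a ≠ z) (haz : ρ a z) (hza : ρ z a) :
    ∀ p : Endpoint ρ, p.base = a → Glued ρ p (.tail ⟨a, z, haz, naz⟩) := by
  have hwz : ∀ w, ρ w a → ρ w z := fun w hwa => (hρ.1.2 w a z a hwa haz hza hwa).2 (hρ.1.1 a)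
  rintro (⟨_, b, hab, nab⟩ | ⟨c, _, hca, nca⟩ | ⟨_, hiso⟩) rfl
  · refine ⟨rfl, fun w hw hwa => ⟨fun _ => hwz w hwa, fun hwz' => ?_⟩⟩
    have hzb : ρ z b := (hρ.1.2 _ z _ b haz hza hab hab).1 (hρ.1.1 _)
    exact rel_of_not_isLockedClasp hC (Ne.symm naz) (Ne.symm naz) hw (Ne.symm nab) hza hwa haz
      hab (hρ.1.1 z) hzb hwz'
  · exact ⟨rfl, hwz c hca⟩
  · exact (hiso ⟨z, Ne.symm naz, Or.inr haz⟩).elim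

def glueSetoid (hC : ClaspsUnlocked ρ) : Setoid (Endpoint ρ) :=
  ⟨Glued ρ, ⟨glued_refl, glued_symm, glued_trans hC⟩⟩

def Point (hC : ClaspsUnlocked ρ) : Type u :=
  Quotient (glueSetoid hC)

variable {hC : ClaspsUnlocked ρ}

instance [Finite X] : Finite (Point hC) := Quotient.finite _

variable (hC) in
def mk (p : Endpoint ρ) : Point hC := Quotient.mk _ p

theorem mk_eq_mk {p q : Endpoint ρ} : mk hC p = mk hC q ↔ Glued ρ p q :=
  ⟨Quotient.exact, Quot.sound⟩

def proj : Point hC → X := Quotient.lift Endpoint.base fun _ _ => base_eq_of_glued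

def Le (u v : Point hC) : Prop :=
  u = v ∨ ∃ e : Arrow ρ, u = mk hC (.tail e) ∧ v = mk hC (.head e)

theorem Le.refl (u : Point hC) : Le u u := Or.inl rfl

theorem le_tail_head (e : Arrow ρ) : Le (mk hC (.tail e)) (mk hC (.head e)) :=
  Or.inr ⟨e, rfl, rfl⟩

theorem Le.trans (hρ : RelStable ρ) {u v w : Point hC} : Le u v → Le v w → Le u w := by
  rintro (rfl | ⟨⟨a, b, hab, nab⟩, rfl, rfl⟩) hvw
  · exact hvw
  rcases hvw with rfl | ⟨⟨b', d, hbd, nbd⟩, hbb', rfl⟩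
  · exact le_tail_head _
  obtain ⟨rfl, had⟩ := mk_eq_mk.1 hbb'
  by_cases nad : a = d
  · subst nad
    exact Or.inl (mk_eq_mk.2 ⟨rfl, hρ.1.1 _⟩)
  · obtain ⟨h₁, -, h₃⟩ := glued_of_transTriple hρ hab hbd had nab nbd nad
    exact Or.inr ⟨_, mk_eq_mk.2 h₁, mk_eq_mk.2 h₃⟩

theorem proj_mono (hrefl : ∀ x, ρ x x) {u v : Point hC} : Le u v → ρ (proj u) (proj v) := by
  rintro (rfl | ⟨e, rfl, rfl⟩)
  · exact hrefl _
  · exact e.rel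

theorem proj_surjective : Function.Surjective (proj (hC := hC)) := by
  intro a
  by_cases hiso : ∃ z, z ≠ a ∧ (ρ z a ∨ ρ a z)
  · obtain ⟨z, hz, hza | haz⟩ := hiso
    · exact ⟨mk hC (.head ⟨z, a, hza, hz⟩), rfl⟩
    · exact ⟨mk hC (.tail ⟨a, z, haz, Ne.symm hz⟩), rfl⟩
  · exact ⟨mk hC (.isolated ⟨a, hiso⟩), rfl⟩

theorem eq_of_le_of_proj_eq {u v : Point hC} (h : Le u v) (he : proj u = proj v) : u = v := by
  rcases h with h | ⟨e, rfl, rfl⟩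
  · exact h
  · exact absurd he e.ne

theorem eq_of_le_of_ne {u v u' v' : Point hC} (h : Le u v) (hne : u ≠ v) (h' : Le u' v')
    (hne' : u' ≠ v') (hu : proj u = proj u') (hv : proj v = proj v') : u = u' ∧ v = v' := by
  obtain ⟨e, rfl, rfl⟩ := h.resolve_left hne
  obtain ⟨e', rfl, rfl⟩ := h'.resolve_left hne'
  obtain rfl : e = e' := Arrow.ext hu hv
  exact ⟨rfl, rfl⟩

theorem injOn_proj_setOf_le (u : Point hC) : Set.InjOn proj {t | Le u t} := by
  intro t ht t' ht' he
  by_cases htu : u = t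
  · subst htu
    exact eq_of_le_of_proj_eq ht' he
  by_cases ht'u : u = t'
  · subst ht'u
    exact (eq_of_le_of_proj_eq ht he.symm).symm
  exact (eq_of_le_of_ne ht htu ht' ht'u rfl he).2

theorem bijOn_proj_strict (hrefl : ∀ x, ρ x x) :
    Set.BijOn (fun p : Point hC × Point hC => (proj p.1, proj p.2))
      {p | Le p.1 p.2 ∧ p.1 ≠ p.2} {q | ρ q.1 q.2 ∧ q.1 ≠ q.2} := by
  refine ⟨fun p hp => ⟨proj_mono hrefl hp.1, fun he => hp.2 (eq_of_le_of_proj_eq hp.1 he)⟩,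
    fun p hp q hq he => ?_, fun q hq => ?_⟩
  · obtain ⟨h₁, h₂⟩ := eq_of_le_of_ne hp.1 hp.2 hq.1 hq.2 (congrArg Prod.fst he)
      (congrArg Prod.snd he)
    exact Prod.ext h₁ h₂
  · refine ⟨(mk hC (.tail ⟨q.1, q.2, hq.1, hq.2⟩), mk hC (.head ⟨q.1, q.2, hq.1, hq.2⟩)),
      ⟨le_tail_head _, fun h => hq.2 (base_eq_of_glued (mk_eq_mk.1 h))⟩, rfl⟩

theorem surjOn_proj_interval (hρ : RelStable ρ) {u v : Point hC} (huv : Le u v) :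
    Set.SurjOn proj (RelInterval Le u v) (RelInterval ρ (proj u) (proj v)) := by
  rintro z ⟨huz, hzv⟩
  by_cases hzu : z = proj u
  · exact ⟨u, ⟨Le.refl u, huv⟩, hzu.symm⟩
  by_cases hzv' : z = proj v
  · exact ⟨v, ⟨huv, Le.refl v⟩, hzv'.symm⟩
  rcases huv with rfl | ⟨⟨a, b, hab, nab⟩, rfl, rfl⟩
  · obtain ⟨p, rfl⟩ := Quotient.exists_rep u
    have hglued := glued_tail_of_rel_of_rel hρ hC (Ne.symm hzu) huz hzv
    refine ⟨mk hC (.head ⟨_, z, huz, Ne.symm hzu⟩),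
      ⟨Or.inr ⟨_, mk_eq_mk.2 (hglued p rfl), rfl⟩, Or.inr ⟨⟨z, _, hzv, hzu⟩, ?_, ?_⟩⟩, rfl⟩
    · exact mk_eq_mk.2 ⟨rfl, hρ.1.1 _⟩
    · exact mk_eq_mk.2 (glued_trans hC (hglued p rfl) (glued_symm (hglued _ rfl)))
  · obtain ⟨h₁, h₂, h₃⟩ := glued_of_transTriple hρ huz hzv hab (Ne.symm hzu) hzv' nab
    exact ⟨mk hC (.head ⟨a, z, huz, Ne.symm hzu⟩), ⟨Or.inr ⟨_, mk_eq_mk.2 (glued_symm h₁), rfl⟩,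
      Or.inr ⟨_, mk_eq_mk.2 h₂, mk_eq_mk.2 (glued_symm h₃)⟩⟩, rfl⟩

theorem isIntervalCompression (hρ : RelStable ρ) :
    IsIntervalCompression ρ (Le (hC := hC)) proj :=
  .of_bijOn Le.refl proj_surjective (bijOn_proj_strict hρ.1.1) fun u _ huv =>
    ⟨fun _ ht => ⟨proj_mono hρ.1.1 ht.1, proj_mono hρ.1.1 ht.2⟩,
      (injOn_proj_setOf_le u).mono fun _ ht => ht.1, surjOn_proj_interval hρ huv⟩

end Unfolding

/-- a stable relation on a finite set all of whose clasps are
unlocked is the compression of a preorder on a finite set `Y`, and there is an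
injective ring homomorphism `I(X,ρ,R) → I(Y,≤,R)`. -/
theorem stable_embeds_in_preorder_incidence {X : Type*} (R : Type*) [Ring R]
    [Finite X] (ρ : X → X → Prop)
    (hstable : RelStable ρ)
    (hclasp : ∀ x : X, IsClasp ρ x → ¬ IsLockedClasp ρ x) :
    ∃ (Y : Type) (le : Y → Y → Prop) (θ : Y → X)
      (h : (X → X → R) → (Y → Y → R)),
      Finite Y ∧
      (∀ y, le y y) ∧ (∀ a b c, le a b → le b c → le a c) ∧
      IsCompression ρ le θ ∧
      (∀ f ∈ IncFun ρ R, h f ∈ IncFun le R) ∧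
      (∀ f ∈ IncFun ρ R, ∀ g ∈ IncFun ρ R, h (f + g) = h f + h g) ∧
      (∀ f ∈ IncFun ρ R, ∀ g ∈ IncFun ρ R, h (conv ρ f g) = conv le (h f) (h g)) ∧
      h (eId X R) = eId Y R ∧
      Set.InjOn h (IncFun ρ R) := by
  have hC : ClaspsUnlocked ρ := hclasp
  -- `Unfolding.Point hC` lives in the universe of `X`, whereas `Y` has to live in `Type`.
  let e := (Finite.equivFin (Unfolding.Point hC)).symm
  have hθ := (Unfolding.isIntervalCompression hstable).comp_equiv e
  have hrefl : ∀ y, Unfolding.Le (e y) (e y) := fun y => Unfolding.Le.refl _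
  exact ⟨Fin _, fun a b => Unfolding.Le (e a) (e b), Unfolding.proj ∘ e, compressMap R _ _,
    inferInstance, hrefl, fun _ _ _ => Unfolding.Le.trans hstable, hθ.toIsCompression,
    fun f _ => compressMap_mem_incFun f, fun f _ g _ => compressMap_add f g,
    fun f _ g _ => hθ.compressMap_conv f g, hθ.compressMap_eId R hrefl,
    hθ.compressMap_injOn R hrefl⟩
end

section
/- Let ρ be a preorder (reflexive and transitive relation) on a set X such that X has a cross-cut of length one or two. Then there is a subset σ of ρ such that σ is a G-grading set for ρ for every group G. -/
open scoped Classical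

universe u v

/-!
On the star of a point `c` (the elements comparable with `c`) a homomorphism `Ψ` of a preorder
is the coboundary `Ψ x y = p x * (p y)⁻¹` of its potential `p x = Ψ x c` (or `(Ψ c x)⁻¹`), so it
is freely determined by one edge to `c` from every other point of the star. A cross-cut `{a}`
makes everything the star of `a`. For a cross-cut `{a, b}` every related pair lies in the star of
`a` or in that of `b`, and on the overlap of the two stars the two potentials differ by a function
that is constant along comparabilities. Hence the edges at `a`, the edges at `b` from outside the
star of `a`, and one edge at `b` for each comparability class of the overlap form a grading set:
arbitrary values on them define two potentials that glue to a homomorphism.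
-/

open Function Relation Set

section Star

variable {X G : Type*} [Group G] (ρ : X → X → Prop)

def relStar (c : X) : Set X := {x | SymmGen ρ x c}

noncomputable def starEdge (c x : X) : X × X := if ρ x c then (x, c) else (c, x)

def starEdges (c : X) (T : Set X) : Set (X × X) := starEdge ρ c '' (T \ {c})

noncomputable def starPot (φ : X × X → G) (c x : X) : G :=
  if ρ x c then φ (x, c) else (φ (c, x))⁻¹

variable {ρ}

lemma starEdge_rel {c x : X} (hx : x ∈ relStar ρ c) :
    ρ (starEdge ρ c x).1 (starEdge ρ c x).2 := by
  unfold starEdge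
  split_ifs with h
  · exact h
  · exact hx.resolve_left h

lemma starEdges_rel {c : X} {T : Set X} (hT : T ⊆ relStar ρ c) :
    ∀ p ∈ starEdges ρ c T, ρ p.1 p.2 := by
  rintro _ ⟨x, hx, rfl⟩
  exact starEdge_rel (hT hx.1)

lemma apply_starEdge_eq_iff {φ ψ : X × X → G} {c x : X} :
    φ (starEdge ρ c x) = ψ (starEdge ρ c x) ↔ starPot ρ φ c x = starPot ρ ψ c x := by
  unfold starEdge starPot
  split_ifs <;> simp

lemma starPot_eq_of_eq_mul_inv {Φ : X → X → G} {g : X → G} {S : Set X}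
    (hΦ : ∀ x ∈ S, ∀ y ∈ S, ρ x y → Φ x y = g x * (g y)⁻¹) {c x : X} (hc : c ∈ S)
    (hgc : g c = 1) (hxS : x ∈ S) (hx : x ∈ relStar ρ c) :
    starPot ρ (uncurry Φ) c x = g x := by
  unfold starPot
  split_ifs with h
  · simp [uncurry, hΦ x hxS c hc h, hgc]
  · simp [uncurry, hΦ c hc x hxS (hx.resolve_left h), hgc]

lemma apply_starEdges_eq {Φ : X → X → G} {g : X → G} {S T : Set X} {φ : X × X → G}
    (hΦ : ∀ x ∈ S, ∀ y ∈ S, ρ x y → Φ x y = g x * (g y)⁻¹) {c : X} (hc : c ∈ S)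
    (hgc : g c = 1) (hT : T ⊆ S ∩ relStar ρ c) (hg : ∀ x ∈ T \ {c}, g x = starPot ρ φ c x) :
    ∀ p ∈ starEdges ρ c T, Φ p.1 p.2 = φ p := by
  rintro _ ⟨x, hx, rfl⟩
  exact apply_starEdge_eq_iff.2 <|
    (starPot_eq_of_eq_mul_inv hΦ hc hgc (hT hx.1).1 (hT hx.1).2).trans (hg x hx)

end Star

namespace IsRelHom

variable {X G : Type*} [Group G] {ρ : X → X → Prop} {Ψ : X → X → G}

lemma apply_self (hΨ : IsRelHom ρ Ψ) {x : X} (hx : ρ x x) : Ψ x x = 1 :=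
  mul_eq_right.mp (hΨ x x x hx hx hx)

lemma apply_swap (hΨ : IsRelHom ρ Ψ) {x y : X} (hx : ρ x x) (hxy : ρ x y) (hyx : ρ y x) :
    Ψ y x = (Ψ x y)⁻¹ :=
  eq_inv_of_mul_eq_one_right <| (hΨ x y x hxy hyx hx).trans (hΨ.apply_self hx)

lemma starPot_self (hΨ : IsRelHom ρ Ψ) {c : X} (hc : ρ c c) :
    starPot ρ (uncurry Ψ) c c = 1 := by
  simp [starPot, hc, uncurry, hΨ.apply_self hc]

lemma eq_starPot_mul_inv (hΨ : IsRelHom ρ Ψ) (hrefl : ∀ x, ρ x x)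
    (htrans : ∀ x y z, ρ x y → ρ y z → ρ x z) {c x y : X} (hx : x ∈ relStar ρ c)
    (hy : y ∈ relStar ρ c) (hxy : ρ x y) :
    Ψ x y = starPot ρ (uncurry Ψ) c x * (starPot ρ (uncurry Ψ) c y)⁻¹ := by
  unfold starPot
  simp only [uncurry]
  by_cases hxc : ρ x c
  · rw [if_pos hxc]
    by_cases hyc : ρ y c
    · rw [if_pos hyc, ← hΨ x y c hxy hyc hxc, mul_inv_cancel_right]
    · rw [if_neg hyc, inv_inv, hΨ x c y hxc (hy.resolve_left hyc) hxy]
  · have hcx : ρ c x := hx.resolve_left hxc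
    have hcy : ρ c y := htrans c x y hcx hxy
    have hpot : (if ρ y c then Ψ y c else (Ψ c y)⁻¹) = (Ψ c y)⁻¹ := by
      split_ifs with hyc
      exacts [hΨ.apply_swap (hrefl c) hcy hyc, rfl]
    rw [if_neg hxc, hpot, inv_inv, ← hΨ c x y hcx hxy hcy, inv_mul_cancel_left]

lemma starPot_eqOn_of_eq_on_starEdges {Ψ₁ Ψ₂ : X → X → G} (h₁ : IsRelHom ρ Ψ₁)
    (h₂ : IsRelHom ρ Ψ₂) {c : X} (hc : ρ c c) {T : Set X}
    (hagree : ∀ p ∈ starEdges ρ c T, Ψ₁ p.1 p.2 = Ψ₂ p.1 p.2) :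
    ∀ x ∈ T, starPot ρ (uncurry Ψ₁) c x = starPot ρ (uncurry Ψ₂) c x := by
  intro x hx
  by_cases hxc : x = c
  · rw [hxc, h₁.starPot_self hc, h₂.starPot_self hc]
  · exact apply_starEdge_eq_iff.1 (hagree _ ⟨x, ⟨hx, hxc⟩, rfl⟩)

end IsRelHom

lemma exists_relHom_of_mul_inv_agree {X G : Type*} [Group G] {ρ : X → X → Prop}
    {S T : Set X} (g k : X → G)
    (hcover : ∀ x y, ρ x y → (x ∈ S ∧ y ∈ S) ∨ (x ∈ T ∧ y ∈ T))
    (hagree : ∀ x ∈ S ∩ T, ∀ y ∈ S ∩ T, ρ x y → g x * (g y)⁻¹ = k x * (k y)⁻¹) :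
    ∃ Φ : X → X → G, IsRelHom ρ Φ ∧
      (∀ x ∈ S, ∀ y ∈ S, ρ x y → Φ x y = g x * (g y)⁻¹) ∧
      (∀ x ∈ T, ∀ y ∈ T, ρ x y → Φ x y = k x * (k y)⁻¹) := by
  let Φ : X → X → G := fun x y => if x ∈ S ∧ y ∈ S then g x * (g y)⁻¹ else k x * (k y)⁻¹
  have hS : ∀ x ∈ S, ∀ y ∈ S, ρ x y → Φ x y = g x * (g y)⁻¹ :=
    fun x hx y hy _ => if_pos ⟨hx, hy⟩
  have hT : ∀ x ∈ T, ∀ y ∈ T, ρ x y → Φ x y = k x * (k y)⁻¹ := by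
    intro x hx y hy hxy
    by_cases hxyS : x ∈ S ∧ y ∈ S
    · exact (hS x hxyS.1 y hxyS.2 hxy).trans
        (hagree x ⟨hxyS.1, hx⟩ y ⟨hxyS.2, hy⟩ hxy)
    · exact if_neg hxyS
  refine ⟨Φ, fun x y z hxy hyz hxz => ?_, hS, hT⟩
  -- two of the three pairs share a patch, and those two pairs already cover all three points
  have htriple : (x ∈ S ∧ y ∈ S ∧ z ∈ S) ∨ (x ∈ T ∧ y ∈ T ∧ z ∈ T) := by
    rcases hcover x y hxy with h₁ | h₁ <;> rcases hcover y z hyz with h₂ | h₂ <;>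
      rcases hcover x z hxz with h₃ | h₃ <;> tauto
  rcases htriple with ⟨hx, hy, hz⟩ | ⟨hx, hy, hz⟩
  · rw [hS x hx y hy hxy, hS y hy z hz hyz, hS x hx z hz hxz]; group
  · rw [hT x hx y hy hxy, hT y hy z hz hyz, hT x hx z hz hxz]; group

lemma isGradingSet_of_exists_of_unique {G X : Type*} [Group G] {ρ : X → X → Prop}
    {σ : Set (X × X)} (hσ : ∀ p ∈ σ, ρ p.1 p.2)
    (hexists : ∀ φ : X × X → G, ∃ Φ, IsRelHom ρ Φ ∧ ∀ p ∈ σ, Φ p.1 p.2 = φ p)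
    (hunique : ∀ Ψ₁ Ψ₂ : X → X → G, IsRelHom ρ Ψ₁ → IsRelHom ρ Ψ₂ →
      (∀ p ∈ σ, Ψ₁ p.1 p.2 = Ψ₂ p.1 p.2) → ∀ x y, ρ x y → Ψ₁ x y = Ψ₂ x y) :
    IsGradingSet G ρ σ := by
  refine ⟨hσ, fun φ => ?_⟩
  obtain ⟨Φ, hΦ, hΦσ⟩ := hexists φ
  exact ⟨Φ, hΦ, hΦσ, fun Ψ hΨ hΨσ =>
    hunique Ψ Φ hΨ hΦ fun p hp => (hΨσ p hp).trans (hΦσ p hp).symm⟩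

lemma IsCrossCut.exists_mem_relStar_of_rel {X : Type*} {ρ : X → X → Prop} {A : Set X}
    (hA : IsCrossCut ρ A) (hrefl : ∀ x, ρ x x) {x y : X} (hxy : ρ x y) :
    ∃ c ∈ A, x ∈ relStar ρ c ∧ y ∈ relStar ρ c := by
  obtain ⟨C, hsub, hC, c, hcA, hcC⟩ := hA.2.2 _ (IsChain.pair hxy)
  have hstar : ∀ z ∈ C, z ∈ relStar ρ c := by
    intro z hz
    by_cases hzc : z = c
    · exact hzc ▸ .of_rel (hrefl z)
    · exact hC hz hcC hzc
  exact ⟨c, hcA, hstar x (hsub (by simp)), hstar y (hsub (by simp))⟩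

section Centres

variable {X G : Type*} [Group G] {ρ : X → X → Prop}

lemma isGradingSet_starEdges (hrefl : ∀ x, ρ x x) (htrans : ∀ x y z, ρ x y → ρ y z → ρ x z)
    {a : X} (ha : ∀ x, x ∈ relStar ρ a) : IsGradingSet G ρ (starEdges ρ a univ) := by
  refine isGradingSet_of_exists_of_unique (starEdges_rel fun x _ => ha x) (fun φ => ?_)
    (fun Ψ₁ Ψ₂ h₁ h₂ hagree x y hxy => ?_)
  · let g := update (starPot ρ φ a) a 1
    exact ⟨fun x y => g x * (g y)⁻¹, fun x y z _ _ _ => by group,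
      apply_starEdges_eq (S := univ) (fun _ _ _ _ _ => rfl) (mem_univ a) (update_self ..)
        (fun x _ => ⟨mem_univ x, ha x⟩) fun x hx => update_of_ne hx.2 ..⟩
  · have hpot := h₁.starPot_eqOn_of_eq_on_starEdges h₂ (hrefl a) hagree
    rw [h₁.eq_starPot_mul_inv hrefl htrans (ha x) (ha y) hxy,
      h₂.eq_starPot_mul_inv hrefl htrans (ha x) (ha y) hxy, hpot x (mem_univ x),
      hpot y (mem_univ y)]

variable (ρ)

/-- On each class of this relation the potentials of a homomorphism around `a` and around `b`
differ by a constant. -/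
def overlapRel (a b : X) (x y : ↥(relStar ρ a ∩ relStar ρ b)) : Prop :=
  SymmGen ρ x y

def twoStarEdges (a b : X) : Set (X × X) :=
  starEdges ρ a (relStar ρ a) ∪ starEdges ρ b (relStar ρ b \ relStar ρ a) ∪
    range fun q : Quot (overlapRel ρ a b) => starEdge ρ b q.out

variable {ρ}

lemma apply_quot_out_mk {α β : Sort*} {r : α → α → Prop} (f : α → β)
    (hf : ∀ x y, r x y → f x = f y) (x : α) : f (Quot.mk r x).out = f x :=
  congrArg (Quot.lift f hf) (Quot.out_eq (Quot.mk r x))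

lemma IsRelHom.starPot_eq_of_mem_overlap {Ψ : X → X → G} (hΨ : IsRelHom ρ Ψ)
    (hrefl : ∀ x, ρ x x) (htrans : ∀ x y z, ρ x y → ρ y z → ρ x z) {a b : X}
    {x : X} (hx : x ∈ relStar ρ a ∩ relStar ρ b) :
    starPot ρ (uncurry Ψ) b x = starPot ρ (uncurry Ψ) a x *
      ((starPot ρ (uncurry Ψ) a (Quot.mk (overlapRel ρ a b) ⟨x, hx⟩).out)⁻¹ *
        starPot ρ (uncurry Ψ) b (Quot.mk (overlapRel ρ a b) ⟨x, hx⟩).out) := by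
  have hrel : ∀ y z : ↥(relStar ρ a ∩ relStar ρ b), ρ y z →
      (starPot ρ (uncurry Ψ) a y)⁻¹ * starPot ρ (uncurry Ψ) b y =
        (starPot ρ (uncurry Ψ) a z)⁻¹ * starPot ρ (uncurry Ψ) b z := by
    intro y z hyz
    have h := (hΨ.eq_starPot_mul_inv hrefl htrans y.2.1 z.2.1 hyz).symm.trans
      (hΨ.eq_starPot_mul_inv hrefl htrans y.2.2 z.2.2 hyz)
    rw [mul_inv_eq_iff_eq_mul] at h
    rw [h]; group
  have hout := apply_quot_out_mk
    (fun y : ↥(relStar ρ a ∩ relStar ρ b) =>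
      (starPot ρ (uncurry Ψ) a y)⁻¹ * starPot ρ (uncurry Ψ) b y)
    (fun y z (hyz : overlapRel ρ a b y z) => hyz.elim (hrel y z) fun hzy => (hrel z y hzy).symm)
    ⟨x, hx⟩
  beta_reduce at hout
  rw [hout, mul_inv_cancel_left]

lemma twoStarEdges_rel {a b : X} : ∀ p ∈ twoStarEdges ρ a b, ρ p.1 p.2 := by
  rintro p ((hp | hp) | ⟨q, rfl⟩)
  · exact starEdges_rel subset_rfl p hp
  · exact starEdges_rel sdiff_subset p hp
  · exact starEdge_rel q.out.2.2

lemma exists_relHom_eq_on_twoStarEdges (hrefl : ∀ x, ρ x x) {a b : X} (hb : b ∉ relStar ρ a)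
    (hcover : ∀ x y, ρ x y →
      (x ∈ relStar ρ a ∧ y ∈ relStar ρ a) ∨ (x ∈ relStar ρ b ∧ y ∈ relStar ρ b))
    (φ : X × X → G) : ∃ Φ, IsRelHom ρ Φ ∧ ∀ p ∈ twoStarEdges ρ a b, Φ p.1 p.2 = φ p := by
  let ga : X → G := update (starPot ρ φ a) a 1
  -- the constant by which the potential around `b` differs from `ga` on a class of the overlap
  let H : Quot (overlapRel ρ a b) → G := fun q => (ga q.out)⁻¹ * starPot ρ φ b q.out
  let gb : X → G := fun x => if hx : x ∈ relStar ρ a ∩ relStar ρ b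
    then ga x * H (Quot.mk _ ⟨x, hx⟩) else update (starPot ρ φ b) b 1 x
  have hgb_mem : ∀ x (hx : x ∈ relStar ρ a ∩ relStar ρ b),
      gb x = ga x * H (Quot.mk _ ⟨x, hx⟩) := fun x hx => dif_pos hx
  have hgb_not_mem : ∀ x ∉ relStar ρ a, gb x = update (starPot ρ φ b) b 1 x :=
    fun x hx => dif_neg fun h => hx h.1
  have hgb_b : gb b = 1 := by rw [hgb_not_mem b hb, update_self]
  obtain ⟨Φ, hΦ, hΦa, hΦb⟩ := exists_relHom_of_mul_inv_agree ga gb hcover <| by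
    intro x hx y hy hxy
    rw [hgb_mem x hx, hgb_mem y hy,
      Quot.sound (show overlapRel ρ a b ⟨x, hx⟩ ⟨y, hy⟩ from .of_rel hxy)]
    group
  refine ⟨Φ, hΦ, ?_⟩
  rintro p ((hp | hp) | ⟨q, rfl⟩)
  · exact apply_starEdges_eq hΦa (.of_rel (hrefl a)) (update_self ..) (fun x hx => ⟨hx, hx⟩)
      (fun x hx => update_of_ne hx.2 ..) p hp
  · exact apply_starEdges_eq hΦb (.of_rel (hrefl b)) hgb_b (fun x hx => ⟨hx.1, hx.1⟩)
      (fun x hx => by rw [hgb_not_mem x hx.1.2, update_of_ne hx.2]) p hp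
  · have hr := q.out.2
    refine apply_starEdge_eq_iff.2 <|
      (starPot_eq_of_eq_mul_inv hΦb (.of_rel (hrefl b)) hgb_b hr.2 hr.2).trans ?_
    rw [hgb_mem _ hr, Quot.out_eq, mul_inv_cancel_left]

lemma IsRelHom.eq_of_eq_on_twoStarEdges {Ψ₁ Ψ₂ : X → X → G} (h₁ : IsRelHom ρ Ψ₁)
    (h₂ : IsRelHom ρ Ψ₂) (hrefl : ∀ x, ρ x x) (htrans : ∀ x y z, ρ x y → ρ y z → ρ x z)
    {a b : X} (hcover : ∀ x y, ρ x y →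
      (x ∈ relStar ρ a ∧ y ∈ relStar ρ a) ∨ (x ∈ relStar ρ b ∧ y ∈ relStar ρ b))
    (hagree : ∀ p ∈ twoStarEdges ρ a b, Ψ₁ p.1 p.2 = Ψ₂ p.1 p.2) {x y : X} (hxy : ρ x y) :
    Ψ₁ x y = Ψ₂ x y := by
  have hpa := h₁.starPot_eqOn_of_eq_on_starEdges h₂ (hrefl a) fun p hp =>
    hagree p (.inl (.inl hp))
  have hpb_out := h₁.starPot_eqOn_of_eq_on_starEdges h₂ (hrefl b) fun p hp =>
    hagree p (.inl (.inr hp))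
  have hpb : ∀ x ∈ relStar ρ b,
      starPot ρ (uncurry Ψ₁) b x = starPot ρ (uncurry Ψ₂) b x := by
    intro x hxb
    by_cases hxa : x ∈ relStar ρ a
    · have hx : x ∈ relStar ρ a ∩ relStar ρ b := ⟨hxa, hxb⟩
      set r := (Quot.mk (overlapRel ρ a b) ⟨x, hx⟩).out
      have hr : starPot ρ (uncurry Ψ₁) b r = starPot ρ (uncurry Ψ₂) b r :=
        apply_starEdge_eq_iff.1 (hagree (starEdge ρ b r) (.inr ⟨_, rfl⟩))
      rw [h₁.starPot_eq_of_mem_overlap hrefl htrans hx,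
        h₂.starPot_eq_of_mem_overlap hrefl htrans hx, hpa x hxa, hpa r r.2.1, hr]
    · exact hpb_out x ⟨hxb, hxa⟩
  rcases hcover x y hxy with ⟨hx, hy⟩ | ⟨hx, hy⟩
  · rw [h₁.eq_starPot_mul_inv hrefl htrans hx hy hxy,
      h₂.eq_starPot_mul_inv hrefl htrans hx hy hxy, hpa x hx, hpa y hy]
  · rw [h₁.eq_starPot_mul_inv hrefl htrans hx hy hxy,
      h₂.eq_starPot_mul_inv hrefl htrans hx hy hxy, hpb x hx, hpb y hy]

lemma isGradingSet_twoStarEdges (hrefl : ∀ x, ρ x x)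
    (htrans : ∀ x y z, ρ x y → ρ y z → ρ x z) {a b : X} (hb : b ∉ relStar ρ a)
    (hcover : ∀ x y, ρ x y →
      (x ∈ relStar ρ a ∧ y ∈ relStar ρ a) ∨ (x ∈ relStar ρ b ∧ y ∈ relStar ρ b)) :
    IsGradingSet G ρ (twoStarEdges ρ a b) :=
  isGradingSet_of_exists_of_unique twoStarEdges_rel
    (exists_relHom_eq_on_twoStarEdges hrefl hb hcover) fun _ _ h₁ h₂ hagree _ _ =>
      h₁.eq_of_eq_on_twoStarEdges h₂ hrefl htrans hcover hagree

end Centres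

/-- a preorder with a cross-cut of length one or two has a
subset `σ ⊆ ρ` which is a `G`-grading set for every group `G`. -/
theorem preorder_crosscut_gradingSet {X : Type v} (ρ : X → X → Prop)
    (hrefl : ∀ x, ρ x x) (htrans : ∀ a b c, ρ a b → ρ b c → ρ a c)
    (A : Set X) (hA : IsCrossCut ρ A) (hcard : A.ncard = 1 ∨ A.ncard = 2) :
    ∃ σ : Set (X × X), (∀ p ∈ σ, ρ p.1 p.2) ∧
      ∀ (G : Type u) [Group G], IsGradingSet G ρ σ := by
  rcases hcard with hcard | hcard
  · obtain ⟨a, rfl⟩ := ncard_eq_one.mp hcard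
    have ha : ∀ x, x ∈ relStar ρ a := fun x => by
      obtain ⟨c, rfl, hx, -⟩ := hA.exists_mem_relStar_of_rel hrefl (hrefl x)
      exact hx
    exact ⟨_, starEdges_rel fun x _ => ha x, fun G _ => isGradingSet_starEdges hrefl htrans ha⟩
  · obtain ⟨a, b, hab, rfl⟩ := ncard_eq_two.mp hcard
    have hb : b ∉ relStar ρ a := by
      obtain ⟨hba, hab'⟩ := hA.1 b (by simp) a (by simp) hab.symm
      rintro (h | h)
      exacts [hba h, hab' h]
    have hcover : ∀ x y, ρ x y →
        (x ∈ relStar ρ a ∧ y ∈ relStar ρ a) ∨ (x ∈ relStar ρ b ∧ y ∈ relStar ρ b) := by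
      intro x y hxy
      obtain ⟨c, hc, hx, hy⟩ := hA.exists_mem_relStar_of_rel hrefl hxy
      rcases hc with rfl | rfl
      exacts [.inl ⟨hx, hy⟩, .inr ⟨hx, hy⟩]
    exact ⟨_, twoStarEdges_rel,
      fun G _ => isGradingSet_twoStarEdges hrefl htrans hb hcover⟩
end

section
/- Let (X,ρ) be a compression of a preorder (Y,≤), i.e., there is a compression map θ : Y → X, where ≤ is reflexive and transitive. If Y has a cross-cut of length one or two, then there is a subset σ of ρ such that σ is a G-grading set for ρ for every group G. -/
open scoped Classical

universe u v

universe w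

/-!
Pulling back along a compression `θ` identifies homomorphisms on `ρ` with homomorphisms on `≤`
(they descend because `θ × θ` is bijective on off-diagonal pairs and every transitive triple
lifts), so the image of a grading set for `≤` is one for `ρ`.

On a preorder, a homomorphism `Ψ` restricted to the elements comparable with `a` is the
coboundary `f x * (f y)⁻¹` of its potential `f y = Ψ y a` (or `(Ψ a y)⁻¹`), and the potential
can be prescribed freely on the pairs through `a`. For a cross-cut `{a}` this covers everything.
For a cross-cut `{a, b}` every chain lies among the elements comparable with `a` or with `b`; on
those comparable with both, the two potentials differ by a factor that is constant along
comparability, so the pairs through `a` and through `b`, keeping only one pair through `b` per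
class of the common part, form a grading set.
-/

open Relation Function Set

section RelHom

variable {X G : Type*} [Group G] {ρ : X → X → Prop} {Φ : X → X → G}

theorem IsRelHom.apply_self_s16 (hΦ : IsRelHom ρ Φ) {x : X} (hx : ρ x x) : Φ x x = 1 := by
  simpa using hΦ x x x hx hx hx

theorem isRelHom_mul_inv (f : X → G) : IsRelHom ρ fun x y => f x * (f y)⁻¹ := by
  intro _ _ _ _ _ _
  group

theorem IsRelHom.comp {Y : Type*} {ρ' : Y → Y → Prop} (hΦ : IsRelHom ρ Φ) {θ : Y → X}
    (hθ : ∀ x y, ρ' x y → ρ (θ x) (θ y)) : IsRelHom ρ' fun x y => Φ (θ x) (θ y) :=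
  fun _ _ _ hxy hyz hxz => hΦ _ _ _ (hθ _ _ hxy) (hθ _ _ hyz) (hθ _ _ hxz)

end RelHom

namespace IsCompression

variable {X Y G : Type*} {ρ : X → X → Prop} {ρ' : Y → Y → Prop} {θ : Y → X}

theorem eq_of_rel_of_map_eq (hθ : IsCompression ρ ρ' θ) {y₁ y₂ : Y} (h : ρ' y₁ y₂)
    (he : θ y₁ = θ y₂) : y₁ = y₂ :=
  of_not_not fun hne => (hθ.bij.mapsTo (show (y₁, y₂) ∈ _ from ⟨h, hne⟩)).2 he

theorem exists_rel_map_eq (hθ : IsCompression ρ ρ' θ) (hrefl : ∀ y, ρ' y y) {x₁ x₂ : X}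
    (h : ρ x₁ x₂) : ∃ y₁ y₂, ρ' y₁ y₂ ∧ θ y₁ = x₁ ∧ θ y₂ = x₂ := by
  by_cases hx : x₁ = x₂
  · obtain ⟨y, rfl⟩ := hθ.surj x₁
    exact ⟨y, y, hrefl y, rfl, hx⟩
  · obtain ⟨⟨y₁, y₂⟩, hy, he⟩ := hθ.bij.surjOn (show (x₁, x₂) ∈ _ from ⟨h, hx⟩)
    exact ⟨y₁, y₂, hy.1, congrArg Prod.fst he, congrArg Prod.snd he⟩

theorem exists_relHom_comp_eq [Group G] (hθ : IsCompression ρ ρ' θ) {Ψ : Y → Y → G}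
    (hΨ : IsRelHom ρ' Ψ) :
    ∃ Φ : X → X → G, IsRelHom ρ Φ ∧ ∀ y₁ y₂, ρ' y₁ y₂ → Φ (θ y₁) (θ y₂) = Ψ y₁ y₂ := by
  let e : {q : Y × Y // ρ' q.1 q.2} → X × X := fun q => Prod.map θ θ q.1
  have hfac : FactorsThrough (fun q : {q : Y × Y // ρ' q.1 q.2} => Ψ q.1.1 q.1.2) e := by
    rintro ⟨⟨y₁, y₂⟩, hy⟩ ⟨⟨z₁, z₂⟩, hz⟩ he
    dsimp only at hy hz ⊢
    obtain ⟨he₁, he₂⟩ := Prod.mk.inj he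
    by_cases hy₁₂ : y₁ = y₂
    · subst hy₁₂
      obtain rfl := hθ.eq_of_rel_of_map_eq hz (he₁.symm.trans he₂)
      exact (hΨ.apply_self_s16 hy).trans (hΨ.apply_self_s16 hz).symm
    · have hz₁₂ : z₁ ≠ z₂ := by
        rintro rfl
        exact hy₁₂ (hθ.eq_of_rel_of_map_eq hy (he₁.trans he₂.symm))
      obtain ⟨rfl, rfl⟩ := Prod.mk.inj (hθ.bij.injOn (show (y₁, y₂) ∈ _ from ⟨hy, hy₁₂⟩)
        (show (z₁, z₂) ∈ _ from ⟨hz, hz₁₂⟩) he)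
      rfl
  let Φ : X → X → G := fun x₁ x₂ => extend e (fun q => Ψ q.1.1 q.1.2) 1 (x₁, x₂)
  have hΦ : ∀ y₁ y₂, ρ' y₁ y₂ → Φ (θ y₁) (θ y₂) = Ψ y₁ y₂ :=
    fun y₁ y₂ h => hfac.extend_apply 1 ⟨(y₁, y₂), h⟩
  refine ⟨Φ, fun x₁ x₂ x₃ h₁₂ h₂₃ h₁₃ => ?_, hΦ⟩
  obtain ⟨y₁, y₂, y₃, l₁₂, l₂₃, l₁₃, rfl, rfl, rfl⟩ := hθ.lift x₁ x₂ x₃ h₁₂ h₂₃ h₁₃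
  rw [hΦ _ _ l₁₂, hΦ _ _ l₂₃, hΦ _ _ l₁₃]
  exact hΨ _ _ _ l₁₂ l₂₃ l₁₃

theorem isGradingSet_image [Group G] (hθ : IsCompression ρ ρ' θ) (hrefl : ∀ y, ρ' y y)
    {τ : Set (Y × Y)} (hτ : IsGradingSet G ρ' τ) : IsGradingSet G ρ (Prod.map θ θ '' τ) := by
  refine ⟨?_, fun φ => ?_⟩
  · rintro _ ⟨q, hq, rfl⟩
    exact hθ.mono _ _ (hτ.1 q hq)
  obtain ⟨Ψ, hΨ, hΨτ, hΨuniq⟩ := hτ.2 (φ ∘ Prod.map θ θ)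
  obtain ⟨Φ, hΦ, hΦΨ⟩ := hθ.exists_relHom_comp_eq hΨ
  refine ⟨Φ, hΦ, ?_, fun Ξ hΞ hΞσ x₁ x₂ hx => ?_⟩
  · rintro _ ⟨q, hq, rfl⟩
    exact (hΦΨ _ _ (hτ.1 q hq)).trans (hΨτ q hq)
  · obtain ⟨y₁, y₂, hy, rfl, rfl⟩ := hθ.exists_rel_map_eq hrefl hx
    rw [hΦΨ _ _ hy]
    exact hΨuniq _ (hΞ.comp hθ.mono) (fun q hq => hΞσ _ ⟨q, hq, rfl⟩) _ _ hy

end IsCompression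

theorem Quot.apply_out_mk {α β : Sort*} {r : α → α → Prop} {f : α → β}
    (hf : ∀ x y, r x y → f x = f y) (x : α) : f (Quot.mk r x).out = f x :=
  congrArg (Quot.lift f hf) (Quot.out_eq (Quot.mk r x))

section Potentials

variable {Y G : Type*} [Preorder Y] [Group G]

def comparables (a : Y) : Set Y :=
  {y | SymmGen (· ≤ ·) y a}

theorem mem_comparables {a y : Y} : y ∈ comparables a ↔ y ≤ a ∨ a ≤ y :=
  Iff.rfl

theorem IsCrossCut.exists_mem_comparables {A : Set Y} (hA : IsCrossCut (· ≤ ·) A)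
    {x y z : Y} (hxy : x ≤ y) (hyz : y ≤ z) :
    ∃ c ∈ A, x ∈ comparables c ∧ y ∈ comparables c ∧ z ∈ comparables c := by
  have hC : IsChain (· ≤ ·) ({x, y, z} : Set Y) := by
    rintro u (rfl | rfl | rfl) v (rfl | rfl | rfl) - <;> simp [*, hxy.trans hyz]
  obtain ⟨C', hCC', hC', c, hcA, hcC'⟩ := hA.2.2 _ hC
  have hcomp : ∀ u ∈ C', u ∈ comparables c := fun u hu => by
    rcases eq_or_ne u c with rfl | hne
    · exact Or.inl le_rfl
    · exact hC' hu hcC' hne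
  exact ⟨c, hcA, hcomp x (hCC' (by simp)), hcomp y (hCC' (by simp)), hcomp z (hCC' (by simp))⟩

def starPairs (a : Y) (s : Set Y) : Set (Y × Y) :=
  (fun y => (y, a)) '' {y ∈ s | y ≤ a ∧ y ≠ a} ∪ (fun y => (a, y)) '' {y ∈ s | a ≤ y ∧ ¬ y ≤ a}

theorem mem_starPairs_le {a : Y} {s : Set Y} {p : Y × Y} (hp : p ∈ starPairs a s) :
    p.1 ≤ p.2 ∧ p.1 ∈ comparables a ∧ p.2 ∈ comparables a := by
  rcases hp with ⟨y, ⟨-, hy, -⟩, rfl⟩ | ⟨y, ⟨-, hy, -⟩, rfl⟩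
  · exact ⟨hy, Or.inl hy, Or.inl le_rfl⟩
  · exact ⟨hy, Or.inl le_rfl, Or.inr hy⟩

noncomputable def potential (Ψ : Y → Y → G) (a y : Y) : G :=
  if y ≤ a then Ψ y a else (Ψ a y)⁻¹

noncomputable def starPotential (φ : Y × Y → G) (a y : Y) : G :=
  if y = a then 1 else if y ≤ a then φ (y, a) else (φ (a, y))⁻¹

theorem IsRelHom.eq_potential_mul_inv {Ψ : Y → Y → G} (hΨ : IsRelHom (· ≤ ·) Ψ) {a x y : Y}
    (hxy : x ≤ y) (hx : x ∈ comparables a) (hy : y ∈ comparables a) :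
    Ψ x y = potential Ψ a x * (potential Ψ a y)⁻¹ := by
  unfold potential
  by_cases hya : y ≤ a
  · rw [if_pos hya, if_pos (hxy.trans hya), ← hΨ x y a hxy hya (hxy.trans hya)]
    group
  have hay : a ≤ y := hy.resolve_left hya
  rw [if_neg hya, inv_inv]
  by_cases hxa : x ≤ a
  · rw [if_pos hxa, hΨ x a y hxa hay hxy]
  · rw [if_neg hxa, ← hΨ a x y (hx.resolve_left hxa) hxy hay]
    group

theorem IsRelHom.potential_eq_starPotential {Ξ : Y → Y → G} (hΞ : IsRelHom (· ≤ ·) Ξ)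
    {φ : Y × Y → G} {a y : Y} {s : Set Y} (hext : ∀ p ∈ starPairs a s, Ξ p.1 p.2 = φ p)
    (hy : y ∈ comparables a) (hs : y ∈ s) : potential Ξ a y = starPotential φ a y := by
  unfold potential starPotential
  by_cases hya : y = a
  · subst hya
    rw [if_pos le_rfl, if_pos rfl, hΞ.apply_self_s16 le_rfl]
  rw [if_neg hya]
  by_cases hle : y ≤ a
  · rw [if_pos hle, if_pos hle]
    exact hext _ (Or.inl ⟨y, ⟨hs, hle, hya⟩, rfl⟩)
  · rw [if_neg hle, if_neg hle]
    exact congrArg _ (hext _ (Or.inr ⟨y, ⟨hs, hy.resolve_left hle, hle⟩, rfl⟩))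

theorem mul_inv_eq_of_mem_starPairs {φ : Y × Y → G} {a : Y} {s : Set Y} {f : Y → G}
    (hf : ∀ y ∈ s, y ∈ comparables a → f y = starPotential φ a y) (ha : f a = 1) :
    ∀ p ∈ starPairs a s, f p.1 * (f p.2)⁻¹ = φ p := by
  rintro _ (⟨y, ⟨hs, hy, hya⟩, rfl⟩ | ⟨y, ⟨hs, hy, hya⟩, rfl⟩)
  · rw [ha, inv_one, mul_one, hf y hs (Or.inl hy), starPotential, if_neg hya, if_pos hy]
  · have hne : y ≠ a := fun h => hya (h ▸ le_rfl)
    rw [ha, one_mul, hf y hs (Or.inr hy), starPotential, if_neg hne, if_neg hya, inv_inv]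

theorem isGradingSet_starPairs_univ {a : Y} (ha : ∀ y, y ∈ comparables a) :
    IsGradingSet G (· ≤ ·) (starPairs a univ) := by
  refine ⟨fun p hp => (mem_starPairs_le hp).1, fun φ => ⟨fun x y =>
    starPotential φ a x * (starPotential φ a y)⁻¹, isRelHom_mul_inv _,
    mul_inv_eq_of_mem_starPairs (fun _ _ _ => rfl) (if_pos rfl), ?_⟩⟩
  intro Ξ hΞ hext x y hxy
  rw [hΞ.eq_potential_mul_inv hxy (ha x) (ha y),
    hΞ.potential_eq_starPotential hext (ha x) trivial,
    hΞ.potential_eq_starPotential hext (ha y) trivial]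

end Potentials

section TwoStars

variable {Y G : Type*} [Preorder Y] [Group G]

def commonRel (a b x y : Y) : Prop :=
  x ∈ comparables a ∩ comparables b ∧ y ∈ comparables a ∩ comparables b ∧ x ≤ y

noncomputable def commonRep (a b y : Y) : Y :=
  (Quot.mk (commonRel a b) y).out

theorem commonRep_mem {a b y : Y} (hy : y ∈ comparables a ∩ comparables b) :
    commonRep a b y ∈ comparables a ∩ comparables b :=
  (Quot.apply_out_mk (f := (· ∈ comparables a ∩ comparables b))
    (fun _ _ h => propext ⟨fun _ => h.2.1, fun _ => h.1⟩) y).mpr hy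

theorem commonRep_commonRep (a b y : Y) : commonRep a b (commonRep a b y) = commonRep a b y :=
  congrArg Quot.out (Quot.out_eq _)

def twoStarPairs (a b : Y) : Set (Y × Y) :=
  starPairs a univ ∪ starPairs b {y | y ∈ comparables a → commonRep a b y = y}

/-- On `comparables a ∩ comparables b` the `b`-potential is the `a`-potential times a factor
that is constant on each class of `commonRel a b`; that factor is read off at the chosen
representative. -/
noncomputable def twoStarPotential (φ : Y × Y → G) (a b y : Y) : G :=
  if y ∈ comparables a then
    starPotential φ a y *
      ((starPotential φ a (commonRep a b y))⁻¹ * starPotential φ b (commonRep a b y))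
  else starPotential φ b y

noncomputable def twoStarHom (φ : Y × Y → G) (a b x y : Y) : G :=
  if x ∈ comparables a ∧ y ∈ comparables a then
    starPotential φ a x * (starPotential φ a y)⁻¹
  else twoStarPotential φ a b x * (twoStarPotential φ a b y)⁻¹

variable {φ : Y × Y → G} {a b : Y}

theorem twoStarPotential_eq_starPotential {y : Y}
    (hy : y ∈ comparables a → commonRep a b y = y) :
    twoStarPotential φ a b y = starPotential φ b y := by
  unfold twoStarPotential
  split_ifs with hya
  · rw [hy hya, mul_inv_cancel_left]
  · rfl

theorem twoStarHom_eq_of_mem_comparables_left {x y : Y} (hx : x ∈ comparables a)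
    (hy : y ∈ comparables a) :
    twoStarHom φ a b x y = starPotential φ a x * (starPotential φ a y)⁻¹ :=
  if_pos ⟨hx, hy⟩

theorem twoStarHom_eq_of_mem_comparables_right {x y : Y} (hxy : x ≤ y)
    (hx : x ∈ comparables b) (hy : y ∈ comparables b) :
    twoStarHom φ a b x y = twoStarPotential φ a b x * (twoStarPotential φ a b y)⁻¹ := by
  unfold twoStarHom
  split_ifs with h
  · have hrep : commonRep a b x = commonRep a b y :=
      congrArg Quot.out (Quot.sound ⟨⟨h.1, hx⟩, ⟨h.2, hy⟩, hxy⟩)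
    rw [twoStarPotential, twoStarPotential, if_pos h.1, if_pos h.2, hrep]
    group
  · rfl

theorem IsRelHom.potential_eq_twoStarPotential {Ξ : Y → Y → G} (hΞ : IsRelHom (· ≤ ·) Ξ)
    (hext : ∀ p ∈ twoStarPairs a b, Ξ p.1 p.2 = φ p) {y : Y} (hyb : y ∈ comparables b) :
    potential Ξ b y = twoStarPotential φ a b y := by
  have hextb : ∀ p ∈ starPairs b _, Ξ p.1 p.2 = φ p := fun p hp => hext p (Or.inr hp)
  by_cases hya : y ∈ comparables a
  swap
  · rw [twoStarPotential_eq_starPotential fun h => absurd h hya]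
    exact hΞ.potential_eq_starPotential hextb hyb fun h => absurd h hya
  have hΞa : ∀ z ∈ comparables a, potential Ξ a z = starPotential φ a z :=
    fun z hz => hΞ.potential_eq_starPotential (fun p hp => hext p (Or.inl hp)) hz trivial
  let d : Y → G := fun z => (potential Ξ a z)⁻¹ * potential Ξ b z
  have hd : ∀ u v, commonRel a b u v → d u = d v := by
    rintro u v ⟨⟨hua, hub⟩, ⟨hva, hvb⟩, huv⟩
    have h := (hΞ.eq_potential_mul_inv huv hua hva).symm.trans
      (hΞ.eq_potential_mul_inv huv hub hvb)
    simp only [d]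
    rw [inv_mul_eq_iff_eq_mul, ← mul_assoc, h, inv_mul_cancel_right]
  set r := commonRep a b y
  have hr := commonRep_mem ⟨hya, hyb⟩
  have hrb : potential Ξ b r = starPotential φ b r :=
    hΞ.potential_eq_starPotential hextb hr.2 fun _ => commonRep_commonRep a b y
  calc potential Ξ b y = potential Ξ a y * d y := by simp only [d, mul_inv_cancel_left]
    _ = starPotential φ a y * d r := by rw [hΞa y hya, show d r = d y from Quot.apply_out_mk hd y]
    _ = twoStarPotential φ a b y := by
      simp only [d, twoStarPotential, if_pos hya, hΞa r hr.1, hrb, r]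

theorem isGradingSet_twoStarPairs (hab : ¬ a ≤ b) (hba : ¬ b ≤ a)
    (hcover : ∀ x y z : Y, x ≤ y → y ≤ z → ∃ c ∈ ({a, b} : Set Y),
      x ∈ comparables c ∧ y ∈ comparables c ∧ z ∈ comparables c) :
    IsGradingSet G (· ≤ ·) (twoStarPairs a b) := by
  refine ⟨fun p hp => hp.elim (fun h => (mem_starPairs_le h).1) (fun h => (mem_starPairs_le h).1),
    fun φ => ⟨twoStarHom φ a b, ?_, ?_, ?_⟩⟩
  · intro x y z hxy hyz hxz
    obtain ⟨c, rfl | rfl, hx, hy, hz⟩ := hcover x y z hxy hyz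
    · rw [twoStarHom_eq_of_mem_comparables_left hx hy,
        twoStarHom_eq_of_mem_comparables_left hy hz,
        twoStarHom_eq_of_mem_comparables_left hx hz]
      group
    · rw [twoStarHom_eq_of_mem_comparables_right hxy hx hy,
        twoStarHom_eq_of_mem_comparables_right hyz hy hz,
        twoStarHom_eq_of_mem_comparables_right hxz hx hz]
      group
  · rintro p (hp | hp) <;> obtain ⟨hle, h₁, h₂⟩ := mem_starPairs_le hp
    · rw [twoStarHom_eq_of_mem_comparables_left h₁ h₂]
      exact mul_inv_eq_of_mem_starPairs (fun _ _ _ => rfl) (if_pos rfl) p hp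
    · rw [twoStarHom_eq_of_mem_comparables_right hle h₁ h₂]
      refine mul_inv_eq_of_mem_starPairs (fun y hy _ => twoStarPotential_eq_starPotential hy) ?_
        p hp
      rw [twoStarPotential_eq_starPotential fun h => absurd h (by simp [mem_comparables, hab, hba])]
      exact if_pos rfl
  · intro Ξ hΞ hext x y hxy
    obtain ⟨c, rfl | rfl, hx, hy, -⟩ := hcover x y y hxy le_rfl
    · have hΞa := fun z hz => hΞ.potential_eq_starPotential (fun p hp => hext p (Or.inl hp)) hz
        (mem_univ z)
      rw [hΞ.eq_potential_mul_inv hxy hx hy, twoStarHom_eq_of_mem_comparables_left hx hy,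
        hΞa x hx, hΞa y hy]
    · rw [hΞ.eq_potential_mul_inv hxy hx hy, twoStarHom_eq_of_mem_comparables_right hxy hx hy,
        hΞ.potential_eq_twoStarPotential hext hx, hΞ.potential_eq_twoStarPotential hext hy]

end TwoStars

/-- if `(X,ρ)` is the compression of a preorder `(Y,≤)` having a
cross-cut of length one or two, then there is a subset `σ ⊆ ρ` which is a
`G`-grading set for every group `G`. -/
theorem compression_crosscut_gradingSet {X : Type v} {Y : Type w}
    (ρ : X → X → Prop) (le : Y → Y → Prop)
    (hrefl : ∀ y, le y y) (htrans : ∀ a b c, le a b → le b c → le a c)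
    (θ : Y → X) (hθ : IsCompression ρ le θ)
    (A : Set Y) (hA : IsCrossCut le A) (hcard : A.ncard = 1 ∨ A.ncard = 2) :
    ∃ σ : Set (X × X), (∀ p ∈ σ, ρ p.1 p.2) ∧
      ∀ (G : Type u) [Group G], IsGradingSet G ρ σ := by
  let _ : Preorder Y := { le := le, le_refl := hrefl, le_trans := htrans }
  obtain ⟨τ, hτ⟩ : ∃ τ : Set (Y × Y), ∀ (G : Type u) [Group G], IsGradingSet G (· ≤ ·) τ := by
    rcases hcard with hcard | hcard
    · obtain ⟨a, rfl⟩ := Set.ncard_eq_one.mp hcard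
      refine ⟨starPairs a univ, fun G _ => isGradingSet_starPairs_univ fun y => ?_⟩
      obtain ⟨_, rfl, hy⟩ := hA.2.1 y
      exact hy
    · obtain ⟨a, b, hab, rfl⟩ := Set.ncard_eq_two.mp hcard
      obtain ⟨hab, hba⟩ := hA.1 a (by simp) b (by simp) hab
      exact ⟨twoStarPairs a b, fun G _ => isGradingSet_twoStarPairs hab hba
        fun x y z hxy hyz => hA.exists_mem_comparables hxy hyz⟩
  have hσ : ∀ (G : Type u) [Group G], IsGradingSet G ρ (Prod.map θ θ '' τ) :=
    fun G _ => hθ.isGradingSet_image hrefl (hτ G)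
  exact ⟨_, (hσ PUnit).1, hσ⟩
end
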